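/- arXiv:1003.1010 — 7 statements merged into one kernel-verified Lean document; each statement's English description precedes it below -/
import Mathlib

section
/- If a connected undirected graph G has the property that every simple path in G has length at most K, then G admits a tree decomposition whose width is at most K and whose depth is at most K. -/
structure RTree where
  U : Type
  fin : Fintype U
  root : U
  parent : U → U
  parent_root : parent root = root
  depth : U → ℕ
  depth_root : depth root = 0
  depth_succ : ∀ u, u ≠ root → depth u = depth (parent u) + 1

/-- `t.Anc u w` : `w` is an ancestor of `u` (or `u` itself). -/
def RTree.Anc (t : RTree) : t.U → t.U → Prop :=
  Relation.ReflTransGen (fun a b => b = t.parent a ∧ a ≠ t.root)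

/-- The set `S` of tree nodes induces a connected subtree. -/
def SubtreeConnected (t : RTree) (S : Set t.U) : Prop :=
  ∃ top ∈ S, ∀ u ∈ S, t.Anc u top ∧ ∀ w, t.Anc u w → t.Anc w top → w ∈ S

def IsTreeDecomp {V : Type} (G : SimpleGraph V) (t : RTree) (θ : t.U → Set V) : Prop :=
  (∀ v, ∃ u, v ∈ θ u) ∧
  (∀ v w, G.Adj v w → ∃ u, v ∈ θ u ∧ w ∈ θ u) ∧
  (∀ v, SubtreeConnected t {u | v ∈ θ u})

/-!
A depth-first search tree of a connected graph is *normal*: the two ends of every edge are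
comparable in the tree. (The vertices with a neighbour outside the current tree all lie on one
branch, and each new vertex is hung below the deepest of them.) So the bags
`θ u := {ancestors of u}` on the tree itself form a tree decomposition, the bag of `u` has
`depth u + 1` elements, and the tree path from `u` to the root is a simple path of `G` of length
`depth u`, hence `depth u ≤ K`.
-/

open Finset Function

variable {V : Type}

/-- `Anc p r u w`: `w` is reached from `u` by following `p`, never stepping from `r`;
for the parent map of an `RTree` this is `RTree.Anc`. -/
def Anc (p : V → V) (r : V) : V → V → Prop :=
  Relation.ReflTransGen (fun a b => b = p a ∧ a ≠ r)

namespace Anc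

variable {p p' : V → V} {r u w a b : V} {T : Set V} {d : V → ℕ}

theorem mem (hT : ∀ v ∈ T, v ≠ r → p v ∈ T) (h : Anc p r u w) (hu : u ∈ T) : w ∈ T := by
  induction h with
  | refl => exact hu
  | tail _ step ih => exact step.1 ▸ hT _ ih step.2

theorem eq_or_depth_lt (hT : ∀ v ∈ T, v ≠ r → p v ∈ T)
    (hd : ∀ v ∈ T, v ≠ r → d v = d (p v) + 1) (h : Anc p r u w) (hu : u ∈ T) :
    w = u ∨ d w < d u := by
  induction h with
  | refl => exact .inl rfl
  | @tail b c hub step ih =>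
    have hcb : d c < d b := by
      rw [step.1, hd b (Anc.mem hT hub hu) step.2]
      omega
    right
    rcases ih with rfl | ih <;> omega

theorem total (ha : Anc p r u a) (hb : Anc p r u b) : Anc p r a b ∨ Anc p r b a :=
  Relation.ReflTransGen.total_of_right_unique (fun _ _ _ h h' => h.1.trans h'.1.symm) ha hb

theorem of_depth_le (hT : ∀ v ∈ T, v ≠ r → p v ∈ T)
    (hd : ∀ v ∈ T, v ≠ r → d v = d (p v) + 1) (ha : Anc p r u a) (hb : Anc p r u b)
    (haT : a ∈ T) (hab : d a ≤ d b) : Anc p r b a := by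
  rcases ha.total hb with h | h
  · rcases h.eq_or_depth_lt hT hd haT with rfl | h
    · exact .refl
    · omega
  · exact h

theorem of_eqOn (hT : ∀ v ∈ T, v ≠ r → p v ∈ T) (hp : Set.EqOn p p' T) (h : Anc p r u w)
    (hu : u ∈ T) : Anc p' r u w := by
  induction h with
  | refl => exact .refl
  | tail hub step ih => exact ih.tail ⟨step.1.trans (hp (Anc.mem hT hub hu)), step.2⟩

theorem ncard_le (hT : ∀ v ∈ T, v ≠ r → p v ∈ T) (hd : ∀ v ∈ T, v ≠ r → d v = d (p v) + 1)
    (hu : u ∈ T) : {w | Anc p r u w}.ncard ≤ d u + 1 := by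
  have hlt : ∀ w, Anc p r u w → d w < d u + 1 := fun w h => by
    rcases h.eq_or_depth_lt hT hd hu with rfl | h <;> omega
  have hinj : Set.InjOn d {w | Anc p r u w} := by
    intro a ha b hb hab
    rcases Anc.total ha hb with h | h
    · rcases h.eq_or_depth_lt hT hd (Anc.mem hT ha hu) with rfl | h
      · rfl
      · omega
    · rcases h.eq_or_depth_lt hT hd (Anc.mem hT hb hu) with rfl | h
      · rfl
      · omega
  calc {w | Anc p r u w}.ncard ≤ (↑(range (d u + 1)) : Set ℕ).ncard :=
        Set.ncard_le_ncard_of_injOn d (fun w h => by simpa using hlt w h) hinj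
    _ = d u + 1 := by rw [Set.ncard_coe_finset, card_range]

end Anc

/-- A rooted tree in `G` on the vertex set `support`, given by parent and depth maps, in which
adjacent vertices are comparable; for `support = univ` it is a normal spanning tree. -/
structure NormalTree (G : SimpleGraph V) (r : V) where
  support : Finset V
  parent : V → V
  depth : V → ℕ
  root_mem : r ∈ support
  parent_root : parent r = r
  depth_root : depth r = 0
  parent_mem : ∀ v ∈ support, v ≠ r → parent v ∈ support
  adj_parent : ∀ v ∈ support, v ≠ r → G.Adj v (parent v)
  depth_parent : ∀ v ∈ support, v ≠ r → depth v = depth (parent v) + 1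
  comparable : ∀ v ∈ support, ∀ w ∈ support, G.Adj v w →
    Anc parent r v w ∨ Anc parent r w v

namespace NormalTree

variable {G : SimpleGraph V} {r : V} (t : NormalTree G r)

/-- The invariant of depth-first search: all vertices with a neighbour outside the tree lie on
the branch from the current vertex `c` to the root. -/
def IsDFS : Prop :=
  ∃ c, ∀ x ∈ t.support, ∀ z ∉ t.support, G.Adj x z → Anc t.parent r c x

def single (G : SimpleGraph V) (r : V) : NormalTree G r where
  support := {r}
  parent := id
  depth := fun _ => 0
  root_mem := mem_singleton_self r
  parent_root := rfl
  depth_root := rfl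
  parent_mem := fun v hv hvr => absurd (mem_singleton.1 hv) hvr
  adj_parent := fun v hv hvr => absurd (mem_singleton.1 hv) hvr
  depth_parent := fun v hv hvr => absurd (mem_singleton.1 hv) hvr
  comparable := fun v hv w hw hvw => by
    rw [mem_singleton.1 hv, mem_singleton.1 hw] at hvw
    exact absurd hvw G.irrefl

theorem isDFS_single : (single G r).IsDFS :=
  ⟨r, fun _ hx _ _ _ => mem_singleton.1 hx ▸ .refl⟩

section Extend

variable [DecidableEq V] {m y : V}

theorem anc_update (hy : y ∉ t.support) {x w : V} (h : Anc t.parent r x w)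
    (hx : x ∈ t.support) : Anc (update t.parent y m) r x w :=
  h.of_eqOn t.parent_mem (fun _ hv => (update_of_ne (ne_of_mem_of_not_mem hv hy) _ _).symm) hx

theorem anc_update_self (hm : m ∈ t.support) (hy : y ∉ t.support) {w : V}
    (h : Anc t.parent r m w) : Anc (update t.parent y m) r y w :=
  (t.anc_update hy h hm).head
    ⟨(update_self y m t.parent).symm, (ne_of_mem_of_not_mem t.root_mem hy).symm⟩

def extend (hm : m ∈ t.support) (hy : y ∉ t.support) (hmy : G.Adj m y)
    (hfront : ∀ x ∈ t.support, ∀ z ∉ t.support, G.Adj x z → Anc t.parent r m x) :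
    NormalTree G r where
  support := insert y t.support
  parent := update t.parent y m
  depth := update t.depth y (t.depth m + 1)
  root_mem := mem_insert_of_mem t.root_mem
  parent_root := by
    rw [update_of_ne (ne_of_mem_of_not_mem t.root_mem hy)]
    exact t.parent_root
  depth_root := by
    rw [update_of_ne (ne_of_mem_of_not_mem t.root_mem hy)]
    exact t.depth_root
  parent_mem := by
    intro v hv hvr
    rcases mem_insert.1 hv with rfl | hv
    · simp [hm]
    · rw [update_of_ne (ne_of_mem_of_not_mem hv hy)]
      exact mem_insert_of_mem (t.parent_mem v hv hvr)
  adj_parent := by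
    intro v hv hvr
    rcases mem_insert.1 hv with rfl | hv
    · simpa using hmy.symm
    · rw [update_of_ne (ne_of_mem_of_not_mem hv hy)]
      exact t.adj_parent v hv hvr
  depth_parent := by
    intro v hv hvr
    rcases mem_insert.1 hv with rfl | hv
    · simp [update_of_ne (ne_of_mem_of_not_mem hm hy)]
    · have hpv := t.parent_mem v hv hvr
      simp only [update_of_ne (ne_of_mem_of_not_mem hv hy),
        update_of_ne (ne_of_mem_of_not_mem hpv hy)]
      exact t.depth_parent v hv hvr
  comparable := by
    intro v hv w hw hvw
    rcases mem_insert.1 hv with rfl | hv' <;> rcases mem_insert.1 hw with rfl | hw'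
    · exact absurd hvw G.irrefl
    · exact .inl (t.anc_update_self hm hy (hfront w hw' v hy hvw.symm))
    · exact .inr (t.anc_update_self hm hy (hfront v hv' w hy hvw))
    · exact (t.comparable v hv' w hw' hvw).imp (t.anc_update hy · hv') (t.anc_update hy · hw')

theorem isDFS_extend (hm : m ∈ t.support) (hy : y ∉ t.support) (hmy : G.Adj m y)
    (hfront : ∀ x ∈ t.support, ∀ z ∉ t.support, G.Adj x z → Anc t.parent r m x) :
    (t.extend hm hy hmy hfront).IsDFS := by
  refine ⟨y, fun x hx z hz hxz => ?_⟩
  rcases mem_insert.1 hx with rfl | hx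
  · exact .refl
  · exact t.anc_update_self hm hy (hfront x hx z (fun h => hz (mem_insert_of_mem h)) hxz)

theorem exists_extend (hdfs : t.IsDFS) (hconn : G.Preconnected) {y₀ : V}
    (hy₀ : y₀ ∉ t.support) :
    ∃ t' : NormalTree G r, t'.IsDFS ∧ t.support.card < t'.support.card := by
  classical
  obtain ⟨c, hc⟩ := hdfs
  set F := t.support.filter fun x => ∃ z ∉ t.support, G.Adj x z
  have hF : F.Nonempty := by
    obtain ⟨q⟩ := hconn r y₀
    obtain ⟨e, -, he₁, he₂⟩ := q.exists_boundary_dart _ t.root_mem hy₀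
    exact ⟨e.fst, mem_filter.2 ⟨he₁, e.snd, he₂, e.adj⟩⟩
  -- `F` lies on the branch of `c`, so its deepest vertex `m` lies below all of `F`
  obtain ⟨m, hmF, hmax⟩ := exists_max_image F t.depth hF
  obtain ⟨hm, y, hy, hmy⟩ := mem_filter.1 hmF
  have hfront : ∀ x ∈ t.support, ∀ z ∉ t.support, G.Adj x z → Anc t.parent r m x :=
    fun x hx z hz hxz => (hc x hx z hz hxz).of_depth_le t.parent_mem t.depth_parent
      (hc m hm y hy hmy) hx (hmax x (mem_filter.2 ⟨hx, z, hz, hxz⟩))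
  refine ⟨t.extend hm hy hmy hfront, t.isDFS_extend hm hy hmy hfront, ?_⟩
  exact (card_insert_of_notMem hy).symm ▸ Nat.lt_succ_self _

end Extend

theorem exists_support_eq_univ [Fintype V] (hconn : G.Preconnected) (r : V) :
    ∃ t : NormalTree G r, t.support = univ := by
  classical
  suffices h : ∀ n, ∃ t : NormalTree G r, t.IsDFS ∧ (n ≤ t.support.card ∨ t.support = univ) by
    obtain ⟨t, -, ht⟩ := h (Fintype.card V + 1)
    exact ⟨t, ht.resolve_left fun h => by have := card_le_univ t.support; omega⟩
  intro n
  induction n with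
  | zero => exact ⟨single G r, isDFS_single, .inl (Nat.zero_le _)⟩
  | succ n ih =>
    obtain ⟨t, hdfs, ht⟩ := ih
    by_cases huniv : t.support = univ
    · exact ⟨t, hdfs, .inr huniv⟩
    obtain ⟨y₀, -, hy₀⟩ := exists_of_ssubset (ssubset_univ_iff.2 huniv)
    obtain ⟨t', hdfs', hcard⟩ := t.exists_extend hdfs hconn hy₀
    exact ⟨t', hdfs', .inl (by have := ht.resolve_right huniv; omega)⟩

theorem exists_isPath_length_eq_depth {v : V} (hv : v ∈ t.support) :
    ∃ q : G.Walk v r, q.IsPath ∧ q.length = t.depth v ∧ ∀ x ∈ q.support, t.depth x ≤ t.depth v := by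
  induction hn : t.depth v generalizing v with
  | zero =>
    have hvr : v = r := by
      by_contra hvr
      have := t.depth_parent v hv hvr
      omega
    subst hvr
    exact ⟨.nil, .nil, rfl, by simp [t.depth_root]⟩
  | succ n ih =>
    have hvr : v ≠ r := fun h => by rw [h, t.depth_root] at hn; omega
    have hdv := t.depth_parent v hv hvr
    obtain ⟨q, hq, hlen, hsupp⟩ := ih (t.parent_mem v hv hvr) (by omega)
    have hvq : v ∉ q.support := fun h => by have := hsupp v h; omega
    refine ⟨.cons (t.adj_parent v hv hvr) q, hq.cons hvq, by simp [hlen], ?_⟩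
    intro x hx
    rw [SimpleGraph.Walk.support_cons, List.mem_cons] at hx
    rcases hx with rfl | hx
    · exact hn.le
    · exact (hsupp x hx).trans n.le_succ

theorem depth_le {K : ℕ} (hpath : ∀ ⦃u v : V⦄ (p : G.Walk u v), p.IsPath → p.length ≤ K)
    {v : V} (hv : v ∈ t.support) : t.depth v ≤ K := by
  obtain ⟨q, hq, hlen, -⟩ := t.exists_isPath_length_eq_depth hv
  exact hlen ▸ hpath q hq

def toRTree [Fintype V] (ht : t.support = univ) : RTree where
  U := V
  fin := inferInstance
  root := r
  parent := t.parent
  parent_root := t.parent_root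
  depth := t.depth
  depth_root := t.depth_root
  depth_succ := fun u hu => t.depth_parent u (ht ▸ mem_univ u) hu

theorem isTreeDecomp_toRTree [Fintype V] (ht : t.support = univ) :
    IsTreeDecomp G (t.toRTree ht) fun u => {v | Anc t.parent r u v} :=
  ⟨fun v => ⟨v, .refl⟩,
    fun v w hvw => (t.comparable v (ht ▸ mem_univ v) w (ht ▸ mem_univ w) hvw).elim
      (fun h => ⟨v, .refl, h⟩) (fun h => ⟨w, h, .refl⟩),
    fun v => ⟨v, .refl, fun _ hu => ⟨hu, fun _ _ h => h⟩⟩⟩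

end NormalTree

/-- If every simple path of a connected graph `G` has length at most `K`, then `G` admits a
tree decomposition of width at most `K` and depth at most `K`. -/
theorem stmt0 {V : Type} [Fintype V] (G : SimpleGraph V) (K : ℕ)
    (hconn : G.Connected)
    (hpath : ∀ ⦃u v : V⦄ (p : G.Walk u v), p.IsPath → p.length ≤ K) :
    ∃ (t : RTree) (θ : t.U → Set V),
      IsTreeDecomp G t θ ∧ (∀ u, t.depth u ≤ K) ∧ (∀ u, (θ u).ncard ≤ K + 1) := by
  obtain ⟨r⟩ := hconn.nonempty
  obtain ⟨t, ht⟩ := NormalTree.exists_support_eq_univ hconn.preconnected r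
  have hmem : ∀ v, v ∈ t.support := fun v => ht ▸ mem_univ v
  refine ⟨t.toRTree ht, _, t.isTreeDecomp_toRTree ht, fun u => t.depth_le hpath (hmem u),
    fun u => ?_⟩
  calc {v | Anc t.parent r u v}.ncard ≤ t.depth u + 1 :=
        Anc.ncard_le (T := ↑t.support) t.parent_mem t.depth_parent (hmem u)
    _ ≤ K + 1 := Nat.succ_le_succ (t.depth_le hpath (hmem u))
end

section
/- The embedding relation ≤ on finite rooted labeled trees of depth at most K over a finite label alphabet (T_1 ≤ T_2 iff there is an injective map from the nodes of T_1 to the nodes of T_2 preserving the root, the labels, and the parent-child relation) is a well-quasi-order: every infinite sequence T_0, T_1, ... of such trees contains indices i < j with T_i ≤ T_j. -/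
/-- A finite rooted unordered tree with nodes labeled by `σ`. -/
structure LTree (σ : Type) where
  U : Type
  fin : Fintype U
  root : U
  parent : U → U
  parent_root : parent root = root
  depth : U → ℕ
  depth_root : depth root = 0
  depth_succ : ∀ u, u ≠ root → depth u = depth (parent u) + 1
  label : U → σ

/-- `T₁ ≤ T₂`: an injective map preserving root, labels and the parent-child relation. -/
def LTree.Emb {σ : Type} (T₁ T₂ : LTree σ) : Prop :=
  ∃ φ : T₁.U → T₂.U, Function.Injective φ ∧ φ T₁.root = T₂.root ∧
    (∀ u, T₂.label (φ u) = T₁.label u) ∧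
    ∀ u, u ≠ T₁.root → φ u ≠ T₂.root ∧ T₂.parent (φ u) = φ (T₁.parent u)

/-!
Truncated at depth `k`, the subtree below a node is encoded by its label together with the list
of codes of its children. By Higman's lemma and induction on `k`, these codes are
well-quasi-ordered by "same label, and the children's codes dominate, in order, the codes of a
sublist of the other node's children". A comparison of the codes of two roots yields an embedding
top-down: a node is sent to the child of its parent's image that the comparison at the parent
matches it with.
-/

namespace List

theorem SublistForall₂.exists_injOn {α β : Type*} [Nonempty β] {R : α → β → Prop}
    {l₁ : List α} {l₂ : List β} (h : SublistForall₂ R l₁ l₂) (hl₂ : l₂.Nodup) :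
    ∃ ψ : α → β, Set.InjOn ψ {a | a ∈ l₁} ∧ ∀ a ∈ l₁, ψ a ∈ l₂ ∧ R a (ψ a) := by
  induction h with
  | nil => exact ⟨fun _ => Classical.arbitrary β, by simp, by simp⟩
  | @cons a b l₁ l₂ hab _ ih =>
    obtain ⟨hb, hl₂⟩ := nodup_cons.1 hl₂
    obtain ⟨ψ, hψinj, hψ⟩ := ih hl₂
    classical
    let ψ' := fun x => if x = a then b else ψ x
    have hψ' : ∀ x ∈ a :: l₁, x ≠ a → ψ' x = ψ x ∧ x ∈ l₁ ∧ ψ x ≠ b := fun x hx hxa =>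
      have hx : x ∈ l₁ := (mem_cons.1 hx).resolve_left hxa
      ⟨if_neg hxa, hx, fun h => hb (h ▸ (hψ x hx).1)⟩
    refine ⟨ψ', fun x hx y hy hxy => ?_, fun x hx => ?_⟩
    · by_cases hxa : x = a <;> by_cases hya : y = a <;> grind [Set.InjOn]
    · by_cases hxa : x = a
      · simp [ψ', hxa, hab]
      · grind
  | cons_right _ ih =>
    obtain ⟨ψ, hψinj, hψ⟩ := ih (nodup_cons.1 hl₂).2
    exact ⟨ψ, hψinj, fun a ha => ⟨mem_cons_of_mem _ (hψ a ha).1, (hψ a ha).2⟩⟩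

theorem wellQuasiOrdered_sublistForall₂ {α : Type*} {r : α → α → Prop} [IsPreorder α r]
    (h : WellQuasiOrdered r) : WellQuasiOrdered (SublistForall₂ r) := by
  rw [← Set.partiallyWellOrderedOn_univ_iff] at h ⊢
  simpa using Set.PartiallyWellOrderedOn.partiallyWellOrderedOn_sublistForall₂ r h

end List

def Code (σ : Type) : ℕ → Type
  | 0 => σ
  | k + 1 => σ × List (Code σ k)

namespace Code

variable {σ : Type}

def Le : (k : ℕ) → Code σ k → Code σ k → Prop
  | 0 => Eq
  | k + 1 => fun x y => x.1 = y.1 ∧ List.SublistForall₂ (Le k) x.2 y.2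

instance isPreorder_le : ∀ k, IsPreorder (Code σ k) (Le k)
  | 0 => inferInstanceAs (IsPreorder σ Eq)
  | k + 1 =>
    have : IsPreorder (Code σ k) (Le k) := isPreorder_le k
    { refl := fun x => ⟨rfl, refl x.2⟩
      trans := fun _ _ _ hxy hyz => ⟨hxy.1.trans hyz.1, _root_.trans hxy.2 hyz.2⟩ }

theorem wellQuasiOrdered_le [Finite σ] : ∀ k, WellQuasiOrdered (Le (σ := σ) k)
  | 0 => Finite.wellQuasiOrdered (α := σ) Eq
  | k + 1 => (Finite.wellQuasiOrdered (α := σ) Eq).prod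
      (List.wellQuasiOrdered_sublistForall₂ (wellQuasiOrdered_le k))

end Code

namespace LTree

variable {σ : Type}

instance (T : LTree σ) : Fintype T.U := T.fin

section

variable (T : LTree σ)

theorem depth_parent_lt {v : T.U} (hv : v ≠ T.root) : T.depth (T.parent v) < T.depth v := by
  rw [T.depth_succ v hv]
  exact Nat.lt_succ_self _

theorem parent_induction {motive : T.U → Prop} (root : motive T.root)
    (parent : ∀ v, v ≠ T.root → motive (T.parent v) → motive v) (v : T.U) : motive v := by
  induction hv : T.depth v using Nat.strong_induction_on generalizing v with
  | _ n ih =>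
    by_cases hroot : v = T.root
    · exact hroot ▸ root
    · exact parent v hroot (ih _ (hv ▸ T.depth_parent_lt hroot) _ rfl)

open Classical in
noncomputable def children (u : T.U) : Finset T.U :=
  Finset.univ.filter fun c => c ≠ T.root ∧ T.parent c = u

variable {T}

theorem mem_children {u c : T.U} : c ∈ T.children u ↔ c ≠ T.root ∧ T.parent c = u := by
  simp [children]

theorem mem_children_parent {v : T.U} (hv : v ≠ T.root) : v ∈ T.children (T.parent v) :=
  mem_children.2 ⟨hv, rfl⟩

theorem depth_of_mem_children {u c : T.U} (hc : c ∈ T.children u) :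
    T.depth c = T.depth u + 1 := by
  obtain ⟨hc_ne, rfl⟩ := mem_children.1 hc
  exact T.depth_succ c hc_ne

end

variable {T₁ T₂ : LTree σ}

open Classical in
/-- `ψ u₁ u₂` is meant to send the children of `u₁` to children of `u₂`. -/
noncomputable def ofChildMaps (T₁ T₂ : LTree σ) (ψ : T₁.U → T₂.U → T₁.U → T₂.U) (v : T₁.U) :
    T₂.U :=
  if _ : v = T₁.root then T₂.root
  else ψ (T₁.parent v) (ofChildMaps T₁ T₂ ψ (T₁.parent v)) v
termination_by T₁.depth v
decreasing_by exact T₁.depth_parent_lt ‹_›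

theorem ofChildMaps_root (ψ : T₁.U → T₂.U → T₁.U → T₂.U) :
    ofChildMaps T₁ T₂ ψ T₁.root = T₂.root := by
  rw [ofChildMaps, dif_pos rfl]

theorem ofChildMaps_of_ne_root (ψ : T₁.U → T₂.U → T₁.U → T₂.U) {v : T₁.U} (hv : v ≠ T₁.root) :
    ofChildMaps T₁ T₂ ψ v = ψ (T₁.parent v) (ofChildMaps T₁ T₂ ψ (T₁.parent v)) v := by
  rw [ofChildMaps, dif_neg hv]

theorem emb_of_children_matching (G : T₁.U → T₂.U → Prop) (hroot : G T₁.root T₂.root)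
    (hlabel : ∀ u₁ u₂, G u₁ u₂ → T₂.label u₂ = T₁.label u₁)
    (hchildren : ∀ u₁ u₂, G u₁ u₂ → ∃ ψ : T₁.U → T₂.U, Set.InjOn ψ (T₁.children u₁) ∧
      ∀ c ∈ T₁.children u₁, ψ c ∈ T₂.children u₂ ∧ G c (ψ c)) :
    T₁.Emb T₂ := by
  have : Nonempty T₂.U := ⟨T₂.root⟩
  choose! ψ hψinj hψ using hchildren
  obtain ⟨φ, hφroot, hφ⟩ : ∃ φ : T₁.U → T₂.U, φ T₁.root = T₂.root ∧
      ∀ v, v ≠ T₁.root → φ v = ψ (T₁.parent v) (φ (T₁.parent v)) v :=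
    ⟨_, ofChildMaps_root ψ, fun v => ofChildMaps_of_ne_root ψ⟩
  have hG : ∀ v, G v (φ v) := T₁.parent_induction (hφroot ▸ hroot) fun v hv ih =>
    hφ v hv ▸ (hψ _ _ ih v (mem_children_parent hv)).2
  have hchild : ∀ v, v ≠ T₁.root → φ v ∈ T₂.children (φ (T₁.parent v)) := fun v hv =>
    hφ v hv ▸ (hψ _ _ (hG _) v (mem_children_parent hv)).1
  refine ⟨φ, fun a => ?_, hφroot, fun v => hlabel _ _ (hG v),
    fun v hv => mem_children.1 (hchild v hv)⟩
  induction a using T₁.parent_induction with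
  | root =>
    intro b hb
    by_contra hne
    exact (mem_children.1 (hchild b (Ne.symm hne))).1 (hb ▸ hφroot)
  | parent a ha ih =>
    intro b hab
    have hb : b ≠ T₁.root := by
      rintro rfl
      exact (mem_children.1 (hchild a ha)).1 (hab.trans hφroot)
    have hpar : T₁.parent a = T₁.parent b := ih <| by
      rw [← (mem_children.1 (hchild a ha)).2, ← (mem_children.1 (hchild b hb)).2, hab]
    rw [hφ a ha, hφ b hb, hpar] at hab
    exact hψinj _ _ (hG _) (hpar ▸ mem_children_parent ha) (mem_children_parent hb) hab

noncomputable def code (T : LTree σ) : (k : ℕ) → T.U → Code σ k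
  | 0, u => T.label u
  | k + 1, u => (T.label u, (T.children u).toList.map (T.code k))

theorem label_eq_of_code_le {k : ℕ} {u₁ : T₁.U} {u₂ : T₂.U}
    (h : Code.Le k (T₁.code k u₁) (T₂.code k u₂)) : T₂.label u₂ = T₁.label u₁ := by
  cases k with
  | zero => exact h.symm
  | succ k => exact h.1.symm

theorem exists_injOn_children_of_code_le {k : ℕ} {u₁ : T₁.U} {u₂ : T₂.U}
    (h : Code.Le (k + 1) (T₁.code (k + 1) u₁) (T₂.code (k + 1) u₂)) :
    ∃ ψ : T₁.U → T₂.U, Set.InjOn ψ (T₁.children u₁) ∧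
      ∀ c ∈ T₁.children u₁, ψ c ∈ T₂.children u₂ ∧ Code.Le k (T₁.code k c) (T₂.code k (ψ c)) := by
  have : Nonempty T₂.U := ⟨T₂.root⟩
  have h : List.SublistForall₂ (Code.Le k) ((T₁.children u₁).toList.map (T₁.code k))
      ((T₂.children u₂).toList.map (T₂.code k)) := h.2
  rw [List.sublistForall₂_map_left_iff, List.sublistForall₂_map_right_iff] at h
  simpa using h.exists_injOn (Finset.nodup_toList _)

theorem emb_of_code_le {K : ℕ} (hK : ∀ u, T₁.depth u ≤ K)
    (h : Code.Le K (T₁.code K T₁.root) (T₂.code K T₂.root)) : T₁.Emb T₂ := by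
  refine emb_of_children_matching
    (fun u₁ u₂ => ∃ k, T₁.depth u₁ + k = K ∧ Code.Le k (T₁.code k u₁) (T₂.code k u₂))
    ⟨K, by rw [T₁.depth_root, zero_add], h⟩ (fun _ _ ⟨_, _, h⟩ => label_eq_of_code_le h) ?_
  rintro u₁ u₂ ⟨_ | k, hk, h⟩
  · have no_children : ∀ c ∈ T₁.children u₁, False := fun c hc => by
      have := hK c
      have := depth_of_mem_children hc
      omega
    exact ⟨fun _ => u₂, fun c hc => (no_children c hc).elim, fun c hc => (no_children c hc).elim⟩
  · obtain ⟨ψ, hψinj, hψ⟩ := exists_injOn_children_of_code_le h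
    exact ⟨ψ, hψinj, fun c hc =>
      ⟨(hψ c hc).1, k, by rw [depth_of_mem_children hc]; omega, (hψ c hc).2⟩⟩

end LTree

/-- The embedding relation on labeled trees of depth at most `K` over a finite alphabet is a
well-quasi-order: every infinite sequence contains `i < j` with `T_i ≤ T_j`. -/
theorem stmt4 (σ : Type) [Finite σ] (K : ℕ) (f : ℕ → LTree σ)
    (hd : ∀ n, ∀ u, (f n).depth u ≤ K) :
    ∃ i j, i < j ∧ (f i).Emb (f j) := by
  obtain ⟨i, j, hij, hle⟩ := Code.wellQuasiOrdered_le K fun n => (f n).code K (f n).root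
  exact ⟨i, j, hij, LTree.emb_of_code_le (hd i) hle⟩
end

section
/- Let G_1, G_2 be Σ_G-labeled graphs with ordered tree decompositions T_1, T_2 of width K (each bag given as a sequence of exactly K+1 vertices, with possible repetitions), and let T_1', T_2' be the corresponding Σ_{G,K}-labeled encoding trees, where each tree node is labeled by the tuple of the vertex labels of its bag sequence together with the equality relation within the bag, the edge relation within the bag, and the vertex-identification relation between the bag and its parent's bag. If there is an injective root-, label-, and parent-child-preserving embedding of T_1' into T_2', then G_1 is an induced labeled subgraph of G_2. -/
/-- `AncP par r u w` : `w` is an ancestor of `u` (or `u` itself). -/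
def AncP {U : Type} (par : U → U) (r : U) : U → U → Prop :=
  Relation.ReflTransGen (fun a b => b = par a ∧ a ≠ r)

/-- `S` induces a connected subtree of the rooted tree given by `par` and `r`. -/
def SubtreeConnectedP {U : Type} (par : U → U) (r : U) (S : Set U) : Prop :=
  ∃ top ∈ S, ∀ u ∈ S, AncP par r u top ∧ ∀ w, AncP par r u w → AncP par r w top → w ∈ S

/-- Conditions for `(par, r, θ)` (bags being sequences of `K+1` vertices) to be an ordered
tree decomposition of the graph `G`. -/
def IsOrdDecomp {V U : Type} (G : SimpleGraph V) (K : ℕ)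
    (par : U → U) (r : U) (θ : U → Fin (K + 1) → V) : Prop :=
  par r = r ∧
  (∀ v, ∃ u i, θ u i = v) ∧
  (∀ v w, G.Adj v w → ∃ u i j, θ u i = v ∧ θ u j = w) ∧
  (∀ v, SubtreeConnectedP par r {u | ∃ i, θ u i = v})

section Aux
variable {U : Type} {par : U → U} {r : U}

/-- Ancestors of a common node are comparable. -/
lemma ancp_comp {a b c : U} (h1 : AncP par r a b) :
    AncP par r a c → AncP par r b c ∨ AncP par r c b := by
  unfold AncP at *
  induction h1 using Relation.ReflTransGen.head_induction_on with
  | refl => exact fun h2 => Or.inl h2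
  | head s hb ih =>
    intro h2
    rcases Relation.ReflTransGen.cases_head h2 with rfl | ⟨c', s', h2'⟩
    · exact Or.inr (Relation.ReflTransGen.head s hb)
    · have : c' = _ := s'.1.trans s.1.symm
      subst this
      exact ih h2'

/-- Transport a vertex occurrence up an ancestor chain, tracking the matching
occurrence in a second family. -/
lemma transport {X Y : Type} {n : ℕ} (f : U → Fin n → X) (g : U → Fin n → Y)
    (hstep : ∀ u, u ≠ r → ∀ i j, f (par u) i = f u j ↔ g (par u) i = g u j)
    (v : X) {u t : U} (h : AncP par r u t) :
    (∀ w, AncP par r u w → AncP par r w t → ∃ k, f w k = v) →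
    ∀ i, f u i = v → ∃ k, f t k = v ∧ g t k = g u i := by
  unfold AncP at h
  induction h using Relation.ReflTransGen.head_induction_on with
  | refl => exact fun _ i hi => ⟨i, hi, rfl⟩
  | head s hb ih =>
    intro hall i hi
    obtain ⟨heq, hne⟩ := s
    have hone : AncP par r _ _ := Relation.ReflTransGen.single ⟨heq, hne⟩
    obtain ⟨k, hk⟩ := hall _ hone hb
    subst heq
    have hg : g (par _) k = g _ i := (hstep _ hne k i).1 (by rw [hk, hi])
    obtain ⟨k', h1, h2⟩ :=
      ih (fun w hw hwt => hall w (Relation.ReflTransGen.trans hone hw) hwt) k hk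
    exact ⟨k', h1, h2.trans hg⟩

end Aux

section Phi
variable {U₁ U₂ : Type} {par₁ : U₁ → U₁} {r₁ : U₁} {par₂ : U₂ → U₂} {r₂ : U₂}
  {φ : U₁ → U₂}

lemma phi_anc_fwd (hφpc : ∀ u, u ≠ r₁ → φ u ≠ r₂ ∧ par₂ (φ u) = φ (par₁ u)) {u m : U₁}
    (h : AncP par₁ r₁ u m) : AncP par₂ r₂ (φ u) (φ m) := by
  unfold AncP at *
  induction h with
  | refl => exact Relation.ReflTransGen.refl
  | tail hab s ih =>
    obtain ⟨heq, hne⟩ := s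
    exact Relation.ReflTransGen.tail ih ⟨by rw [heq, ← (hφpc _ hne).2], (hφpc _ hne).1⟩

lemma phi_anc_bwd (hφr : φ r₁ = r₂)
    (hφpc : ∀ u, u ≠ r₁ → φ u ≠ r₂ ∧ par₂ (φ u) = φ (par₁ u)) {u : U₁} {w : U₂}
    (h : AncP par₂ r₂ (φ u) w) : ∃ m, w = φ m ∧ AncP par₁ r₁ u m := by
  unfold AncP at *
  induction h with
  | refl => exact ⟨u, rfl, Relation.ReflTransGen.refl⟩
  | tail hab s ih =>
    obtain ⟨m, rfl, hm⟩ := ih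
    obtain ⟨heq, hne⟩ := s
    have hmr : m ≠ r₁ := fun h => hne (h ▸ hφr)
    exact ⟨par₁ m, by rw [heq, (hφpc m hmr).2], Relation.ReflTransGen.tail hm ⟨rfl, hmr⟩⟩

end Phi

/-- If the encoding trees of ordered tree decompositions of width `K` of labeled graphs
`G₁, G₂` embed (injectively, preserving root, parent-child relation, and the encoded labels:
bag labels, in-bag equality, in-bag edges, and parent-bag identification), then `G₁` is an
induced labeled subgraph of `G₂`. -/
theorem stmt6 {σ : Type} [Finite σ] (K : ℕ)
    {V₁ V₂ : Type} [Fintype V₁] [Fintype V₂]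
    (G₁ : SimpleGraph V₁) (ℓ₁ : V₁ → σ) (G₂ : SimpleGraph V₂) (ℓ₂ : V₂ → σ)
    {U₁ U₂ : Type} [Fintype U₁] [Fintype U₂]
    (r₁ : U₁) (par₁ : U₁ → U₁) (θ₁ : U₁ → Fin (K + 1) → V₁)
    (r₂ : U₂) (par₂ : U₂ → U₂) (θ₂ : U₂ → Fin (K + 1) → V₂)
    (hdec₁ : IsOrdDecomp G₁ K par₁ r₁ θ₁) (hdec₂ : IsOrdDecomp G₂ K par₂ r₂ θ₂)
    (φ : U₁ → U₂) (hφinj : Function.Injective φ) (hφr : φ r₁ = r₂)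
    (hφpc : ∀ u, u ≠ r₁ → φ u ≠ r₂ ∧ par₂ (φ u) = φ (par₁ u))
    (hlab : ∀ u i, ℓ₂ (θ₂ (φ u) i) = ℓ₁ (θ₁ u i))
    (hlam1 : ∀ u i j, θ₁ u i = θ₁ u j ↔ θ₂ (φ u) i = θ₂ (φ u) j)
    (hlam2 : ∀ u i j, G₁.Adj (θ₁ u i) (θ₁ u j) ↔ G₂.Adj (θ₂ (φ u) i) (θ₂ (φ u) j))
    (hlam3 : ∀ u, u ≠ r₁ → ∀ i j, θ₁ (par₁ u) i = θ₁ u j ↔ θ₂ (par₂ (φ u)) i = θ₂ (φ u) j) :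
    ∃ π : V₁ → V₂, Function.Injective π ∧ (∀ v, ℓ₂ (π v) = ℓ₁ v) ∧
      ∀ v w, G₁.Adj v w ↔ G₂.Adj (π v) (π w) := by
  obtain ⟨hroot₁, hcov₁, hedge₁, hconn₁⟩ := hdec₁
  obtain ⟨hroot₂, hcov₂, hedge₂, hconn₂⟩ := hdec₂
  choose uf sf hθ using hcov₁
  set π : V₁ → V₂ := fun v => θ₂ (φ (uf v)) (sf v) with hπ
  have hπv : ∀ v, π v = θ₂ (φ (uf v)) (sf v) := fun _ => rfl
  -- step compatibility
  have hstep : ∀ u, u ≠ r₁ → ∀ i j,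
      θ₁ (par₁ u) i = θ₁ u j ↔ θ₂ (φ (par₁ u)) i = θ₂ (φ u) j := by
    intro u hu i j
    rw [← (hφpc u hu).2]
    exact hlam3 u hu i j
  -- well-definedness of π
  have keyA : ∀ u i, θ₂ (φ u) i = π (θ₁ u i) := by
    intro u i
    set v := θ₁ u i with hv
    obtain ⟨t, ht, hprop⟩ := hconn₁ v
    have hu : u ∈ {u | ∃ i, θ₁ u i = v} := ⟨i, rfl⟩
    have huv : uf v ∈ {u | ∃ i, θ₁ u i = v} := ⟨sf v, hθ v⟩
    obtain ⟨k, hk, hgk⟩ := transport θ₁ (fun u => θ₂ (φ u)) hstep v (hprop u hu).1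
      (fun w hw hwt => (hprop u hu).2 w hw hwt) i hv.symm
    obtain ⟨k', hk', hgk'⟩ := transport θ₁ (fun u => θ₂ (φ u)) hstep v (hprop (uf v) huv).1
      (fun w hw hwt => (hprop (uf v) huv).2 w hw hwt) (sf v) (hθ v)
    have heqt : θ₂ (φ t) k = θ₂ (φ t) k' := (hlam1 t k k').1 (hk.trans hk'.symm)
    rw [hπv]
    exact hgk.symm.trans (heqt.trans hgk')
  -- injectivity
  have hinj : Function.Injective π := by
    intro v w h
    obtain ⟨t₂, ht₂, hprop₂⟩ := hconn₂ (π v)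
    have hmv : φ (uf v) ∈ {u | ∃ i, θ₂ u i = π v} := ⟨sf v, rfl⟩
    have hmw : φ (uf w) ∈ {u | ∃ i, θ₂ u i = π v} := ⟨sf w, by rw [h]⟩
    obtain ⟨m, rfl, hamv⟩ := phi_anc_bwd hφr hφpc (hprop₂ _ hmv).1
    obtain ⟨m', hm', hamw⟩ := phi_anc_bwd hφr hφpc (hprop₂ _ hmw).1
    have hmm : m' = m := hφinj hm'.symm
    rw [hmm] at hamw
    have hstep' : ∀ u, u ≠ r₁ → ∀ i j,
        θ₂ (φ (par₁ u)) i = θ₂ (φ u) j ↔ θ₁ (par₁ u) i = θ₁ u j :=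
      fun u hu i j => (hstep u hu i j).symm
    obtain ⟨k, hk, hgk⟩ := transport (fun u => θ₂ (φ u)) θ₁ hstep' (π v) hamv
      (fun w' hw' hwt => (hprop₂ _ hmv).2 (φ w') (phi_anc_fwd hφpc hw')
        (phi_anc_fwd hφpc hwt)) (sf v) rfl
    obtain ⟨k', hk', hgk'⟩ := transport (fun u => θ₂ (φ u)) θ₁ hstep' (π v) hamw
      (fun w' hw' hwt => (hprop₂ _ hmw).2 (φ w') (phi_anc_fwd hφpc hw')
        (phi_anc_fwd hφpc hwt)) (sf w) (by rw [h])
    have heqm : θ₁ m k = θ₁ m k' := (hlam1 m k k').2 (hk.trans hk'.symm)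
    calc v = θ₁ (uf v) (sf v) := (hθ v).symm
    _ = θ₁ m k := hgk.symm
    _ = θ₁ m k' := heqm
    _ = θ₁ (uf w) (sf w) := hgk'
    _ = w := hθ w
  refine ⟨π, hinj, fun v => ?_, fun v w => ?_⟩
  · rw [hπv, hlab, hθ]
  · constructor
    · intro hadj
      obtain ⟨u, i, j, hi, hj⟩ := hedge₁ v w hadj
      have h1 : π v = θ₂ (φ u) i := by rw [← hi, ← keyA]
      have h2 : π w = θ₂ (φ u) j := by rw [← hj, ← keyA]
      rw [h1, h2]
      exact (hlam2 u i j).1 (by rwa [hi, hj])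
    · intro hadj
      obtain ⟨u₂, i₂, j₂, hi₂, hj₂⟩ := hedge₂ _ _ hadj
      obtain ⟨tA, htA, hpA⟩ := hconn₂ (π v)
      obtain ⟨tB, htB, hpB⟩ := hconn₂ (π w)
      have hu₂A : u₂ ∈ {u | ∃ i, θ₂ u i = π v} := ⟨i₂, hi₂⟩
      have hu₂B : u₂ ∈ {u | ∃ i, θ₂ u i = π w} := ⟨j₂, hj₂⟩
      have hvA : φ (uf v) ∈ {u | ∃ i, θ₂ u i = π v} := ⟨sf v, rfl⟩
      have hwB : φ (uf w) ∈ {u | ∃ i, θ₂ u i = π w} := ⟨sf w, rfl⟩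
      have hkey : ∃ m k k', θ₂ (φ m) k = π v ∧ θ₂ (φ m) k' = π w := by
        rcases ancp_comp (hpA u₂ hu₂A).1 (hpB u₂ hu₂B).1 with hc | hc
        · have htAB := (hpB u₂ hu₂B).2 tA (hpA u₂ hu₂A).1 hc
          obtain ⟨m, rfl, -⟩ := phi_anc_bwd hφr hφpc (hpA _ hvA).1
          obtain ⟨k, hk⟩ := htA
          obtain ⟨k', hk'⟩ := htAB
          exact ⟨m, k, k', hk, hk'⟩
        · have htBA := (hpA u₂ hu₂A).2 tB (hpB u₂ hu₂B).1 hc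
          obtain ⟨m, rfl, -⟩ := phi_anc_bwd hφr hφpc (hpB _ hwB).1
          obtain ⟨k, hk⟩ := htB
          obtain ⟨k', hk'⟩ := htBA
          exact ⟨m, k', k, hk', hk⟩
      obtain ⟨m, k, k', hk, hk'⟩ := hkey
      have hv' : θ₁ m k = v := hinj (by rw [← keyA, hk])
      have hw' : θ₁ m k' = w := hinj (by rw [← keyA, hk'])
      rw [← hv', ← hw']
      exact (hlam2 m k k').2 (by rwa [hk, hk'])
end

section
/- Let T_1, T_2 be finite data trees (rooted unordered trees with internal nodes labeled by a finite alphabet Σ and leaves labeled by Σ or by data values from an infinite domain D). Then T_1 ⪯ T_2 (there is an injective map preserving the root, the parent-child relation both ways, the Σ-labels, and the equality/inequality of data values at data leaves) if and only if G_ℓ(T_1) is an induced labeled subgraph of G_ℓ(T_2), where G_ℓ(T) is the labeled graph obtained from T by adding one vertex (labeled $) for each data value occurring in T, connecting each data leaf to the vertex of its value, and labeling each tree node by its tag (or # for data leaves) paired with its depth. -/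
/-- A finite data tree: internal nodes labeled by tags from `σ`, leaves by `σ ⊕ D`. -/
structure DataTree (σ D : Type) where
  V : Type
  fin : Fintype V
  root : V
  parent : V → V
  parent_root : parent root = root
  depth : V → ℕ
  depth_root : depth root = 0
  depth_succ : ∀ v, v ≠ root → depth v = depth (parent v) + 1
  label : V → σ ⊕ D
  internal_tag : ∀ v w, w ≠ root → parent w = v → (label v).isLeft

/-- `T₁ ⪯ T₂`: an injective map preserving root, parent-child relation (both ways), Σ-labels,
and equality/inequality of data values at data leaves. -/
def DataTree.Pre {σ D : Type} (T₁ T₂ : DataTree σ D) : Prop :=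
  ∃ φ : T₁.V → T₂.V, Function.Injective φ ∧ φ T₁.root = T₂.root ∧
    (∀ v w, (w ≠ T₁.root ∧ T₁.parent w = v) ↔ (φ w ≠ T₂.root ∧ T₂.parent (φ w) = φ v)) ∧
    (∀ v a, T₁.label v = Sum.inl a → T₂.label (φ v) = Sum.inl a) ∧
    (∀ v w d d', T₁.label v = Sum.inr d → T₁.label w = Sum.inr d' →
      ∃ e e', T₂.label (φ v) = Sum.inr e ∧ T₂.label (φ w) = Sum.inr e' ∧ (d = d' ↔ e = e'))

/-- Vertices of the labeled graph `G_ℓ(T)`: tree nodes plus one vertex per occurring data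
value. -/
def DataTree.GVert {σ D : Type} (T : DataTree σ D) : Type :=
  T.V ⊕ {d : D // ∃ v, T.label v = Sum.inr d}

/-- Labels of `G_ℓ(T)`: a tree node gets its tag (`none` standing for `#` at data leaves)
paired with its depth; data-value vertices get the label `$` (here `Sum.inr ()`). -/
def DataTree.GLab {σ D : Type} (T : DataTree σ D) : T.GVert → (Option σ × ℕ) ⊕ Unit
  | Sum.inl v => Sum.inl ((T.label v).getLeft?, T.depth v)
  | Sum.inr _ => Sum.inr ()

def DataTree.GAdjBase {σ D : Type} (T : DataTree σ D) : T.GVert → T.GVert → Prop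
  | Sum.inl v, Sum.inl w => w ≠ T.root ∧ T.parent w = v
  | Sum.inl v, Sum.inr d => T.label v = Sum.inr d.val
  | _, _ => False

/-- Adjacency in `G_ℓ(T)`: tree edges plus edges from data leaves to their value vertices. -/
def DataTree.GAdj {σ D : Type} (T : DataTree σ D) (x y : T.GVert) : Prop :=
  T.GAdjBase x y ∨ T.GAdjBase y x

/-- Depth is preserved by a pre-embedding. -/
lemma DataTree.depth_pres {σ D : Type} (T₁ T₂ : DataTree σ D) (φ : T₁.V → T₂.V)
    (hroot : φ T₁.root = T₂.root)
    (hpar : ∀ v w, (w ≠ T₁.root ∧ T₁.parent w = v) ↔ (φ w ≠ T₂.root ∧ T₂.parent (φ w) = φ v)) :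
    ∀ v, T₂.depth (φ v) = T₁.depth v := by
  suffices h : ∀ n v, T₁.depth v = n → T₂.depth (φ v) = n by
    intro v; exact h _ v rfl
  intro n
  induction n using Nat.strong_induction_on with
  | _ n ih =>
    intro v hv
    by_cases hv0 : v = T₁.root
    · subst hv0
      rw [T₁.depth_root] at hv
      rw [hroot, T₂.depth_root, ← hv]
    · have h := (hpar (T₁.parent v) v).mp ⟨hv0, rfl⟩
      have hd : T₁.depth v = T₁.depth (T₁.parent v) + 1 := T₁.depth_succ v hv0
      have h2 := T₂.depth_succ (φ v) h.1
      rw [h.2] at h2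
      have h3 := ih (T₁.depth (T₁.parent v)) (by omega) (T₁.parent v) rfl
      omega


/-- `T₁ ⪯ T₂` iff `G_ℓ(T₁)` is an induced labeled subgraph of `G_ℓ(T₂)`. -/
theorem stmt7 {σ D : Type} [Finite σ] (B : ℕ) (T₁ T₂ : DataTree σ D)
    (h₁ : ∀ v, T₁.depth v ≤ B) (h₂ : ∀ v, T₂.depth v ≤ B) :
    T₁.Pre T₂ ↔
      ∃ ψ : T₁.GVert → T₂.GVert, Function.Injective ψ ∧
        (∀ x, T₂.GLab (ψ x) = T₁.GLab x) ∧
        ∀ x y, T₁.GAdj x y ↔ T₂.GAdj (ψ x) (ψ y) := by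
  constructor
  · rintro ⟨φ, hInj, hroot, hpar, htag, hdata⟩
    have hdepth := DataTree.depth_pres T₁ T₂ φ hroot hpar
    have key : ∀ d : {d : D // ∃ v, T₁.label v = Sum.inr d},
        ∃ e : D, (∃ w, T₂.label w = Sum.inr e) ∧
          ∀ v, T₁.label v = Sum.inr d.val → T₂.label (φ v) = Sum.inr e := by
      rintro ⟨d, v₀, hv₀⟩
      obtain ⟨e, e', he, he', _⟩ := hdata v₀ v₀ d d hv₀ hv₀
      refine ⟨e, ⟨φ v₀, he⟩, ?_⟩
      intro v hv
      obtain ⟨e₁, e₂, he₁, he₂, hiff⟩ := hdata v v₀ d d hv hv₀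
      have h1 : e₂ = e := by rw [he₂] at he; exact Sum.inr.inj he
      have h2 : e₁ = e₂ := hiff.mp rfl
      rw [he₁, h2, h1]
    choose g hg₁ hg₂ using key
    -- forward image lemma: label v = inr d ↔ label (φ v) = inr (g d)
    have hfwd : ∀ (v : T₁.V) (d : {d : D // ∃ v, T₁.label v = Sum.inr d}),
        T₁.label v = Sum.inr d.val ↔ T₂.label (φ v) = Sum.inr (g d) := by
      intro v d
      constructor
      · exact hg₂ d v
      · intro h
        rcases hl : T₁.label v with a | d'
        · have := htag v a hl
          rw [this] at h; exact absurd h (by simp)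
        · have hd' : T₂.label (φ v) = Sum.inr (g ⟨d', v, hl⟩) := hg₂ ⟨d', v, hl⟩ v hl
          rw [hd'] at h
          have hge : g ⟨d', v, hl⟩ = g d := Sum.inr.inj h
          -- deduce d' = d
          obtain ⟨w, hw⟩ := d.2
          obtain ⟨e₁, e₂, he₁, he₂, hiff⟩ := hdata v w d' d.val hl hw
          have hx1 : e₁ = g ⟨d', v, hl⟩ := by
            have := hg₂ ⟨d', v, hl⟩ v hl; rw [he₁] at this; exact Sum.inr.inj this
          have hx2 : e₂ = g d := by
            have := hg₂ d w hw; rw [he₂] at this; exact Sum.inr.inj this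
          have : d' = d.val := hiff.mpr (by rw [hx1, hx2, hge])
          exact congrArg Sum.inr this
    have ginj : Function.Injective g := by
      intro d d' hgd
      obtain ⟨v, hv⟩ := d.2
      obtain ⟨w, hw⟩ := d'.2
      obtain ⟨e₁, e₂, he₁, he₂, hiff⟩ := hdata v w d.val d'.val hv hw
      have hx1 : e₁ = g d := by
        have := hg₂ d v hv; rw [he₁] at this; exact Sum.inr.inj this
      have hx2 : e₂ = g d' := by
        have := hg₂ d' w hw; rw [he₂] at this; exact Sum.inr.inj this
      exact Subtype.ext (hiff.mpr (by rw [hx1, hx2, hgd]))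
    refine ⟨fun x => match x with
      | Sum.inl v => Sum.inl (φ v)
      | Sum.inr d => Sum.inr ⟨g d, hg₁ d⟩, ?_, ?_, ?_⟩
    · rintro (v | d) (w | d') h <;> simp only [] at h
      · exact congrArg Sum.inl (hInj (Sum.inl.inj h))
      · exact absurd h (by simp)
      · exact absurd h (by simp)
      · have : g d = g d' := congrArg Subtype.val (Sum.inr.inj h)
        exact congrArg Sum.inr (ginj this)
    · rintro (v | d)
      · simp only [DataTree.GLab, hdepth]
        rcases hl : T₁.label v with a | d'
        · rw [htag v a hl]
        · rw [(hfwd v ⟨d', v, hl⟩).mp hl]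
          rfl
      · rfl
    · rintro (v | d) (w | d')
      · simp only [DataTree.GAdj, DataTree.GAdjBase]
        constructor
        · rintro (h | h)
          · exact Or.inl ((hpar v w).mp h)
          · exact Or.inr ((hpar w v).mp h)
        · rintro (h | h)
          · exact Or.inl ((hpar v w).mpr h)
          · exact Or.inr ((hpar w v).mpr h)
      · simp only [DataTree.GAdj, DataTree.GAdjBase]
        rw [hfwd v d']
      · simp only [DataTree.GAdj, DataTree.GAdjBase]
        rw [hfwd w d]
      · simp only [DataTree.GAdj, DataTree.GAdjBase]
  · rintro ⟨ψ, hInj, hlab, hadj⟩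
    have hnode : ∀ v : T₁.V, ∃ w : T₂.V, ψ (Sum.inl v) = Sum.inl w := by
      intro v
      rcases h : ψ (Sum.inl v) with w | c
      · exact ⟨w, rfl⟩
      · have := hlab (Sum.inl v)
        rw [h] at this
        exact absurd this (by simp [DataTree.GLab])
    choose φ hφ using hnode
    have hdat : ∀ d, ∃ c, ψ (Sum.inr d) = Sum.inr c := by
      intro d
      rcases h : ψ (Sum.inr d) with w | c
      · have := hlab (Sum.inr d)
        rw [h] at this
        exact absurd this (by simp [DataTree.GLab])
      · exact ⟨c, rfl⟩
    choose gψ hgψ using hdat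
    have hlab' : ∀ v, (T₂.label (φ v)).getLeft? = (T₁.label v).getLeft? ∧
        T₂.depth (φ v) = T₁.depth v := by
      intro v
      have := hlab (Sum.inl v)
      rw [hφ v] at this
      simp only [DataTree.GLab, Sum.inl.injEq, Prod.mk.injEq] at this
      exact this
    have hφinj : Function.Injective φ := by
      intro v w h
      have : ψ (Sum.inl v) = ψ (Sum.inl w) := by rw [hφ v, hφ w, h]
      exact Sum.inl.inj (hInj this)
    have hφroot : φ T₁.root = T₂.root := by
      have hd : T₂.depth (φ T₁.root) = 0 := by
        rw [(hlab' T₁.root).2, T₁.depth_root]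
      by_contra h
      have := T₂.depth_succ _ h
      omega
    have hpar' : ∀ v w, (w ≠ T₁.root ∧ T₁.parent w = v) ↔
        (φ w ≠ T₂.root ∧ T₂.parent (φ w) = φ v) := by
      intro v w
      have hA := hadj (Sum.inl v) (Sum.inl w)
      rw [hφ v, hφ w] at hA
      simp only [DataTree.GAdj, DataTree.GAdjBase] at hA
      constructor
      · intro h
        have hd : T₁.depth w = T₁.depth v + 1 := by
          have := T₁.depth_succ w h.1; rw [h.2] at this; exact this
        rcases hA.mp (Or.inl h) with h' | h'
        · exact h'
        · exfalso
          have := T₂.depth_succ _ h'.1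
          rw [h'.2] at this
          rw [(hlab' v).2, (hlab' w).2] at this
          omega
      · intro h
        have hd : T₁.depth w = T₁.depth v + 1 := by
          have := T₂.depth_succ _ h.1
          rw [h.2, (hlab' v).2, (hlab' w).2] at this
          exact this
        rcases hA.mpr (Or.inl h) with h' | h'
        · exact h'
        · exfalso
          have := T₁.depth_succ _ h'.1
          rw [h'.2] at this
          omega
    refine ⟨φ, hφinj, hφroot, hpar', ?_, ?_⟩
    · intro v a hl
      have := (hlab' v).1
      rw [hl] at this
      rcases h2 : T₂.label (φ v) with b | e
      · rw [h2] at this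
        simp only [Sum.getLeft?] at this
        rw [Option.some.inj this]
      · rw [h2] at this
        exact absurd this (by simp)
    · intro v w d d' hv hw
      have getv := (hlab' v).1
      rw [hv] at getv
      rcases h2 : T₂.label (φ v) with b | e
      · rw [h2] at getv; exact absurd getv (by simp)
      have getw := (hlab' w).1
      rw [hw] at getw
      rcases h3 : T₂.label (φ w) with b' | e'
      · rw [h3] at getw; exact absurd getw (by simp)
      refine ⟨e, e', rfl, rfl, ?_⟩
      -- relate to data-value vertices
      have hev : ∀ (u : T₁.V) (f : D) (huf : T₁.label u = Sum.inr f) (ff : D),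
          T₂.label (φ u) = Sum.inr ff → ff = (gψ ⟨f, u, huf⟩).val := by
        intro u f huf ff hff
        have hA := hadj (Sum.inl u) (Sum.inr ⟨f, u, huf⟩)
        rw [hφ u, hgψ] at hA
        simp only [DataTree.GAdj, DataTree.GAdjBase, or_false] at hA
        have := hA.mp huf
        rw [hff] at this
        exact Sum.inr.inj this
      have he : e = (gψ ⟨d, v, hv⟩).val := hev v d hv e h2
      have he' : e' = (gψ ⟨d', w, hw⟩).val := hev w d' hw e' h3
      constructor
      · intro hdd
        subst hdd
        rw [he, he']
      · intro hee
        rw [he, he'] at hee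
        have : ψ (Sum.inr ⟨d, v, hv⟩) = ψ (Sum.inr ⟨d', w, hw⟩) := by
          rw [hgψ, hgψ]
          exact congrArg Sum.inr (Subtype.ext hee)
        have := hInj this
        exact congrArg Subtype.val (Sum.inr.inj this)
end

section
/- The relation ⪯ on data trees of depth at most B whose associated graphs have all simple paths of length at most K is a well-quasi-order: every infinite sequence T_0, T_1, ... of such data trees contains i < j with T_i ⪯ T_j. -/
open Function

theorem List.SublistForall₂.exists_embedding {α β : Type*} {R : α → β → Prop}
    {l₁ : List α} {l₂ : List β} (h : List.SublistForall₂ R l₁ l₂) :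
    ∃ g : Fin l₁.length ↪ Fin l₂.length, ∀ k, R l₁[k] l₂[g k] := by
  obtain ⟨l, hR, hl⟩ := List.sublistForall₂_iff.1 h
  obtain ⟨f, hf⟩ := List.sublist_iff_exists_fin_orderEmbedding_get_eq.1 hl
  obtain ⟨hlen, hR⟩ := List.forall₂_iff_get.1 hR
  refine ⟨(finCongr hlen).toEmbedding.trans f.toEmbedding, fun k => ?_⟩
  have := hf (finCongr hlen k)
  simp only [List.get_eq_getElem, finCongr_apply, Fin.val_cast] at this hR
  simpa [← this] using hR k k.2 (hlen ▸ k.2)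

theorem Set.PartiallyWellOrderedOn.exists_injective_of_finite {α : Type*} {r : α → α → Prop}
    [IsPreorder α r] {s : Set α} (hs : s.PartiallyWellOrderedOn r) (ι : ℕ → Type*)
    [∀ n, Finite (ι n)] (x : ∀ n, ι n → α) (hx : ∀ n a, x n a ∈ s) :
    ∃ i j, i < j ∧ ∃ g : ι i → ι j, Injective g ∧ ∀ a, r (x i a) (x j (g a)) := by
  let e n := Finite.equivFin (ι n)
  obtain ⟨i, j, hij, hsub⟩ := (partiallyWellOrderedOn_sublistForall₂ r hs).exists_lt
    (f := fun n => List.ofFn (x n ∘ (e n).symm)) fun n y hy => by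
      obtain ⟨k, rfl⟩ := List.mem_ofFn.1 hy
      exact hx _ _
  obtain ⟨g, hg⟩ := hsub.exists_embedding
  let g' : ι i ↪ ι j := (e i).toEmbedding.trans <|
    (finCongr List.length_ofFn.symm).toEmbedding.trans <|
    g.trans <| (finCongr List.length_ofFn).toEmbedding.trans (e j).symm.toEmbedding
  refine ⟨i, j, hij, g', g'.injective, fun a => ?_⟩
  convert hg (finCongr List.length_ofFn.symm (e i a)) using 1
  · simp
  · simp [g']
    rfl

theorem Function.IsFixedPt.eq_of_iterate_eq {α : Type*} {f : α → α} {x a b : α} {m n : ℕ}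
    (ha : IsFixedPt f a) (hb : IsFixedPt f b) (hm : f^[m] x = a) (hn : f^[n] x = b) : a = b :=
  calc a = f^[n] (f^[m] x) := by rw [hm, (ha.iterate n).eq]
    _ = f^[m] (f^[n] x) := (Commute.iterate_iterate_self f n m).eq x
    _ = b := by rw [hn, (hb.iterate m).eq]

theorem Function.Semiconj.isFixedPt_apply_iff {α β : Type*} {fa : α → α} {fb : β → β}
    {g : α → β} (h : Semiconj g fa fb) (hg : Injective g) {x : α} :
    IsFixedPt fb (g x) ↔ IsFixedPt fa x :=
  ⟨fun hx => hg ((h x).trans hx), fun hx => hx.map h⟩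

/-- Roots are the fixed points of `parent`; acyclicity comes from `HeightLE`. -/
structure LabeledForest (L : Type) : Type 1 where
  V : Type
  [finite : Finite V]
  parent : V → V
  label : V → L

namespace LabeledForest

attribute [instance] finite

variable {L : Type}

abbrev Root (F : LabeledForest L) : Type := {r // IsFixedPt F.parent r}

def HeightLE (d : ℕ) (F : LabeledForest L) : Prop := ∀ v, IsFixedPt F.parent (F.parent^[d] v)

def Embeds (F G : LabeledForest L) : Prop :=
  ∃ φ : F.V → G.V, Injective φ ∧ Semiconj φ F.parent G.parent ∧ ∀ v, G.label (φ v) = F.label v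

theorem Embeds.refl (F : LabeledForest L) : Embeds F F :=
  ⟨id, injective_id, Semiconj.id_left, fun _ => rfl⟩

theorem Embeds.trans {F G H : LabeledForest L} : Embeds F G → Embeds G H → Embeds F H := by
  rintro ⟨φ, hφ, hφp, hφl⟩ ⟨ψ, hψ, hψp, hψl⟩
  exact ⟨ψ ∘ φ, hψ.comp hφ, hψp.comp_left hφp, fun v => (hψl _).trans (hφl v)⟩

open Classical in
/-- The proper descendants of `r`, with the children of `r` as roots. -/
noncomputable def child (F : LabeledForest L) (r : F.V) : LabeledForest L where
  V := {v // v ≠ r ∧ ∃ k, F.parent^[k] v = r}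
  parent x := if h : F.parent x.1 = r then x else
    ⟨F.parent x.1, h, match x.2.2 with
      | ⟨0, hk⟩ => absurd hk x.2.1
      | ⟨k + 1, hk⟩ => ⟨k, hk⟩⟩
  label x := F.label x.1

section Child

variable {F : LabeledForest L} {r : F.V}

theorem not_isFixedPt_of_child (hr : IsFixedPt F.parent r) (x : (F.child r).V) :
    ¬ IsFixedPt F.parent x.1 := fun hx =>
  x.2.1 (hx.eq_of_iterate_eq hr (m := 0) rfl x.2.2.choose_spec)

theorem child_parent_of_eq (x : (F.child r).V) (h : F.parent x.1 = r) :
    (F.child r).parent x = x :=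
  dif_pos h

theorem val_child_parent_of_ne (x : (F.child r).V) (h : F.parent x.1 ≠ r) :
    ((F.child r).parent x).1 = F.parent x.1 :=
  congrArg Subtype.val (dif_neg h)

theorem isFixedPt_child_parent_iff (hr : IsFixedPt F.parent r) (x : (F.child r).V) :
    IsFixedPt (F.child r).parent x ↔ F.parent x.1 = r := by
  refine ⟨fun hx => ?_, child_parent_of_eq x⟩
  by_contra h
  have := val_child_parent_of_ne x h
  rw [hx.eq] at this
  exact not_isFixedPt_of_child hr x this.symm

theorem parent_eq_iff_of_semiconj {G : LabeledForest L} {s : G.V} (hr : IsFixedPt F.parent r)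
    (hs : IsFixedPt G.parent s) {ψ : (F.child r).V → (G.child s).V} (hψ : Injective ψ)
    (hψp : Semiconj ψ (F.child r).parent (G.child s).parent) (x : (F.child r).V) :
    G.parent (ψ x).1 = s ↔ F.parent x.1 = r := by
  rw [← isFixedPt_child_parent_iff hs, ← isFixedPt_child_parent_iff hr]
  exact hψp.isFixedPt_apply_iff hψ

theorem heightLE_child {d : ℕ} (hF : F.HeightLE (d + 1)) (hr : IsFixedPt F.parent r) :
    (F.child r).HeightLE d := by
  have key : ∀ k (x : (F.child r).V), F.parent ((F.child r).parent^[k] x).1 = r ∨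
      ((F.child r).parent^[k] x).1 = F.parent^[k] x.1 := by
    intro k
    induction k with
    | zero => exact fun _ => Or.inr rfl
    | succ k ih =>
      intro x
      rw [iterate_succ_apply', iterate_succ_apply']
      by_cases h : F.parent ((F.child r).parent^[k] x).1 = r
      · rw [child_parent_of_eq _ h]
        exact Or.inl h
      · rw [val_child_parent_of_ne _ h, (ih x).resolve_left h]
        exact Or.inr rfl
  refine fun x => child_parent_of_eq _ ((key d x).elim id fun h => ?_)
  rw [h, ← iterate_succ_apply' F.parent]
  exact (hF x.1).eq_of_iterate_eq hr rfl x.2.2.choose_spec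

end Child

section Glue

variable {d : ℕ} {F G : LabeledForest L} (hF : F.HeightLE d)

def rootOf (v : F.V) : F.Root := ⟨F.parent^[d] v, hF v⟩

theorem mem_child_rootOf {v : F.V} (hv : ¬ IsFixedPt F.parent v) :
    v ≠ (rootOf hF v).1 ∧ ∃ k, F.parent^[k] v = (rootOf hF v).1 :=
  ⟨fun h => hv (h ▸ (rootOf hF v).2), d, rfl⟩

variable (g : F.Root → G.Root) (ψ : ∀ r : F.Root, (F.child r.1).V → (G.child (g r).1).V)

open Classical in
noncomputable def glue (v : F.V) : G.V :=
  if hv : IsFixedPt F.parent v then (g ⟨v, hv⟩).1 else (ψ _ ⟨v, mem_child_rootOf hF hv⟩).1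

theorem glue_root (r : F.Root) : glue hF g ψ r.1 = (g r).1 :=
  dif_pos r.2

theorem glue_child (r : F.Root) (x : (F.child r.1).V) : glue hF g ψ x.1 = (ψ r x).1 := by
  have hψ_congr : ∀ (r' : F.Root) (x' : (F.child r'.1).V), r' = r → x'.1 = x.1 →
      (ψ r' x').1 = (ψ r x).1 := by
    rintro _ _ rfl h
    rw [Subtype.ext h]
  exact (dif_neg (not_isFixedPt_of_child r.2 x)).trans <| hψ_congr _ _
    (Subtype.ext ((rootOf hF x.1).2.eq_of_iterate_eq r.2 rfl x.2.2.choose_spec)) rfl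

theorem glue_injective (hg : Injective g) (hψ : ∀ r, Injective (ψ r)) :
    Injective (glue hF g ψ) := by
  have hcases (v : F.V) :
      (∃ r : F.Root, r.1 = v) ∨ ∃ (r : F.Root) (x : (F.child r.1).V), x.1 = v := by
    by_cases hv : IsFixedPt F.parent v
    · exact Or.inl ⟨⟨v, hv⟩, rfl⟩
    · exact Or.inr ⟨_, ⟨v, mem_child_rootOf hF hv⟩, rfl⟩
  intro v w h
  rcases hcases v with ⟨r, rfl⟩ | ⟨r, x, rfl⟩ <;> rcases hcases w with ⟨r', rfl⟩ | ⟨r', x', rfl⟩ <;>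
    simp only [glue_root, glue_child] at h
  · exact congrArg Subtype.val (hg (Subtype.ext h))
  · exact absurd (h ▸ (g r).2) (not_isFixedPt_of_child (g r').2 (ψ r' x'))
  · exact absurd (h ▸ (g r').2) (not_isFixedPt_of_child (g r).2 (ψ r x))
  · obtain rfl : r = r' := hg <| Subtype.ext <| (g r).2.eq_of_iterate_eq (g r').2
      (ψ r x).2.2.choose_spec (by rw [h]; exact (ψ r' x').2.2.choose_spec)
    exact congrArg Subtype.val (hψ r (Subtype.ext h))

theorem semiconj_glue (hψ : ∀ r, Injective (ψ r))
    (hψp : ∀ r, Semiconj (ψ r) (F.child r.1).parent (G.child (g r).1).parent) :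
    Semiconj (glue hF g ψ) F.parent G.parent := by
  intro v
  by_cases hv : IsFixedPt F.parent v
  · rw [hv.eq, glue_root hF g ψ ⟨v, hv⟩]
    exact (g _).2.symm
  set r := rootOf hF v
  set x : (F.child r.1).V := ⟨v, mem_child_rootOf hF hv⟩
  have hroot := parent_eq_iff_of_semiconj r.2 (g r).2 (hψ r) (hψp r) x
  rw [show glue hF g ψ v = (ψ r x).1 from glue_child hF g ψ r x]
  by_cases hpv : F.parent v = r.1
  · rw [hpv, glue_root, hroot.2 hpv]
  · rw [← val_child_parent_of_ne x hpv, glue_child, (hψp r).eq x,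
      val_child_parent_of_ne _ (mt hroot.1 hpv)]

end Glue

theorem embeds_of_roots {d : ℕ} {F G : LabeledForest L} (hF : F.HeightLE d)
    (g : F.Root → G.Root) (hg : Injective g) (hlab : ∀ r, G.label (g r).1 = F.label r.1)
    (hchild : ∀ r : F.Root, Embeds (F.child r.1) (G.child (g r).1)) : Embeds F G := by
  choose ψ hψ hψp hψl using hchild
  refine ⟨glue hF g ψ, glue_injective hF g ψ hg hψ, semiconj_glue hF g ψ hψ hψp, fun v => ?_⟩
  by_cases hv : IsFixedPt F.parent v
  · rw [glue_root hF g ψ ⟨v, hv⟩]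
    exact hlab _
  · rw [show glue hF g ψ v = _ from glue_child hF g ψ _ ⟨v, mem_child_rootOf hF hv⟩]
    exact hψl _ _

theorem partiallyWellOrderedOn_heightLE [Finite L] (d : ℕ) :
    {F : LabeledForest L | F.HeightLE d}.PartiallyWellOrderedOn Embeds := by
  rw [Set.partiallyWellOrderedOn_iff_exists_lt]
  induction d with
  | zero =>
    intro f hf
    obtain ⟨i, j, hij, g, hg, hlab⟩ :=
      (Set.finite_univ.partiallyWellOrderedOn (r := @Eq L)).exists_injective_of_finite
        (fun n => (f n).V) (fun n => (f n).label) fun _ _ => Set.mem_univ _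
    exact ⟨i, j, hij, g, hg, fun v => (congrArg g (hf i v)).trans (hf j (g v)).symm,
      fun v => (hlab v).symm⟩
  | succ d ih =>
    intro f hf
    have : IsPreorder (L × LabeledForest L) fun x y => x.1 = y.1 ∧ Embeds x.2 y.2 :=
      { refl x := ⟨rfl, Embeds.refl _⟩
        trans _ _ _ h₁ h₂ := ⟨h₁.1.trans h₂.1, h₁.2.trans h₂.2⟩ }
    obtain ⟨i, j, hij, g, hg, hgr⟩ :=
      ((Set.finite_univ.partiallyWellOrderedOn (r := @Eq L)).prod
        (Set.partiallyWellOrderedOn_iff_exists_lt.2 ih)).exists_injective_of_finite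
        (fun n => (f n).Root) (fun n r => ((f n).label r.1, (f n).child r.1))
        fun n r => ⟨Set.mem_univ _, heightLE_child (hf n) r.2⟩
    exact ⟨i, j, hij, embeds_of_roots (hf i) g hg (fun r => (hgr r).1.symm) fun r => (hgr r).2⟩

end LabeledForest

structure IsSpanningForest {V : Type*} (A : V → V → Prop) (p : V → V) (h : V → ℕ) : Prop where
  height_eq_zero : ∀ v, IsFixedPt p v → h v = 0
  adj : ∀ v, ¬ IsFixedPt p v → A v (p v)
  height_eq_succ : ∀ v, ¬ IsFixedPt p v → h v = h (p v) + 1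

theorem isSpanningForest_id {V : Type*} (A : V → V → Prop) : IsSpanningForest A id 0 :=
  ⟨fun _ _ => rfl, fun v hv => absurd (isFixedPt_id v) hv, fun v hv => absurd (isFixedPt_id v) hv⟩

namespace IsSpanningForest

variable {V : Type*} {A : V → V → Prop} {p : V → V} {h : V → ℕ}

theorem isFixedPt_of_height_eq_zero (hF : IsSpanningForest A p h) {v : V} (hv : h v = 0) :
    IsFixedPt p v := by
  by_contra hn
  have := hF.height_eq_succ v hn
  omega

theorem height_iterate (hF : IsSpanningForest A p h) (v : V) :
    ∀ k ≤ h v, h (p^[k] v) = h v - k := by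
  intro k
  induction k with
  | zero => simp
  | succ k ih =>
    intro hk
    have hne : ¬ IsFixedPt p (p^[k] v) := fun hfix => by
      have := hF.height_eq_zero _ hfix
      omega
    have := hF.height_eq_succ _ hne
    rw [iterate_succ_apply']
    omega

theorem isFixedPt_iterate_of_height_le (hF : IsSpanningForest A p h) {v : V} {K : ℕ}
    (hK : h v ≤ K) : IsFixedPt p (p^[K] v) := by
  have hroot : IsFixedPt p (p^[h v] v) :=
    hF.isFixedPt_of_height_eq_zero (by rw [hF.height_iterate v _ le_rfl, Nat.sub_self])
  rw [← Nat.sub_add_cancel hK, iterate_add_apply, (hroot.iterate _).eq]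
  exact hroot

theorem nodup_ancestors (hF : IsSpanningForest A p h) (v : V) :
    ((List.range (h v + 1)).map (p^[·] v)).Nodup := by
  refine List.nodup_range.map_on fun k hk l hl hkl => ?_
  rw [List.mem_range] at hk hl
  have h1 := hF.height_iterate v k (by omega)
  have h2 := hF.height_iterate v l (by omega)
  rw [hkl] at h1
  omega

theorem isChain_ancestors (hF : IsSpanningForest A p h) (v : V) :
    ((List.range (h v + 1)).map (p^[·] v)).IsChain A := by
  rw [List.isChain_map, List.isChain_range_succ]
  intro k hk
  rw [iterate_succ_apply']
  refine hF.adj _ fun hfix => ?_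
  have := hF.height_eq_zero _ hfix
  have := hF.height_iterate v k hk.le
  omega

theorem height_lt_card [Fintype V] (hF : IsSpanningForest A p h) (v : V) :
    h v < Fintype.card V := by
  simpa using (hF.nodup_ancestors v).length_le_card

theorem height_le_of_paths (hF : IsSpanningForest A p h) {K : ℕ}
    (hpath : ∀ l : List V, l.IsChain A → l.Nodup → l.length ≤ K + 1) (v : V) : h v ≤ K := by
  simpa using hpath _ (hF.isChain_ancestors v) (hF.nodup_ancestors v)

open Classical in
theorem reattach (hF : IsSpanningForest A p h) {u v : V} (huv : A u v) (hle : h u ≤ h v)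
    (hvu : ¬ ∃ k, p^[k] v = u) :
    IsSpanningForest A (update p u v)
      (fun w => if ∃ k, p^[k] w = u then h w + (h v + 1 - h u) else h w) := by
  have hdesc (w : V) (hw : w ≠ u) : (∃ k, p^[k] (p w) = u) ↔ ∃ k, p^[k] w = u := by
    refine ⟨fun ⟨k, hk⟩ => ⟨k + 1, hk⟩, ?_⟩
    rintro ⟨_ | k, hk⟩
    · exact absurd hk hw
    · exact ⟨k, hk⟩
  have hu : ¬ IsFixedPt (update p u v) u := by
    rw [IsFixedPt, update_self]
    exact fun h => hvu ⟨0, h⟩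
  have hfix (w : V) (hw : w ≠ u) : IsFixedPt (update p u v) w ↔ IsFixedPt p w := by
    rw [IsFixedPt, IsFixedPt, update_of_ne hw]
  refine ⟨fun w hw => ?_, fun w hw => ?_, fun w hw => ?_⟩ <;> by_cases hwu : w = u
  · exact absurd (hwu ▸ hw) hu
  · have hw := (hfix w hwu).1 hw
    have : ¬ ∃ k, p^[k] w = u := fun ⟨k, hk⟩ => hwu ((hw.iterate k).eq.symm.trans hk)
    simp only [this, if_false, hF.height_eq_zero w hw]
  · subst hwu
    simpa using huv
  · rw [update_of_ne hwu]
    exact hF.adj w (mt (hfix w hwu).2 hw)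
  · subst hwu
    simp only [update_self, hvu, show ∃ k, p^[k] w = w from ⟨0, rfl⟩, if_true, if_false]
    omega
  · have := hF.height_eq_succ w (mt (hfix w hwu).2 hw)
    simp only [update_of_ne hwu, hdesc w hwu]
    split_ifs <;> omega

end IsSpanningForest

open Classical in
/-- A spanning forest maximizing the sum of heights is normal: an edge `u v` between incomparable
vertices with `h u ≤ h v` would let `reattach` increase that sum. -/
theorem exists_isSpanningForest_normal {V : Type*} [Finite V] {A : V → V → Prop}
    (hA : ∀ x y, A x y → A y x) :
    ∃ p h, IsSpanningForest A p h ∧ ∀ x y, A x y → (∃ k, p^[k] y = x) ∨ ∃ k, p^[k] x = y := by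
  have := Fintype.ofFinite V
  let n := Fintype.card V
  obtain ⟨⟨p, h⟩, hF, hmin⟩ := (measure fun q : (V → V) × (V → ℕ) => n * n - ∑ v, q.2 v).wf.has_min
    {q | IsSpanningForest A q.1 q.2} ⟨(id, 0), isSpanningForest_id A⟩
  have hnormal : ∀ u v, A u v → h u ≤ h v → ∃ k, p^[k] v = u := by
    intro u v huv hle
    by_contra hvu
    let h' w := if ∃ k, p^[k] w = u then h w + (h v + 1 - h u) else h w
    have hF' : IsSpanningForest A (update p u v) h' := hF.reattach huv hle hvu
    refine hmin (update p u v, h') hF' ?_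
    have hsum : ∑ w, h w < ∑ w, h' w := by
      refine Finset.sum_lt_sum (fun w _ => by simp only [h']; split_ifs <;> omega)
        ⟨u, Finset.mem_univ _, ?_⟩
      simp only [h', show ∃ k, p^[k] u = u from ⟨0, rfl⟩, if_true]
      omega
    have hbound : ∑ w, h' w ≤ n * n :=
      calc _ ≤ ∑ _w : V, n := Finset.sum_le_sum fun w _ => (hF'.height_lt_card w).le
        _ = n * n := by simp [n]
    show n * n - ∑ w, h' w < n * n - ∑ w, h w
    omega
  refine ⟨p, h, hF, fun x y hxy => ?_⟩
  rcases le_total (h x) (h y) with hle | hle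
  · exact Or.inl (hnormal x y hxy hle)
  · exact Or.inr (hnormal y x (hA x y hxy) hle)

section InducedEmbedding

variable {V W : Type*}

def ancestorCode (R : V → V → Prop) (p : V → V) (K : ℕ) (x : V) : Fin (K + 1) → Prop × Prop :=
  fun k => (R (p^[k] x) x, R x (p^[k] x))

theorem exists_fin_iterate_eq {p : V → V} {K : ℕ} {x y : V} (hK : IsFixedPt p (p^[K] y))
    (h : ∃ k, p^[k] y = x) : ∃ k : Fin (K + 1), p^[k] y = x := by
  obtain ⟨k, rfl⟩ := h
  rcases le_or_gt k K with hk | hk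
  · exact ⟨⟨k, by omega⟩, rfl⟩
  · refine ⟨Fin.last K, ?_⟩
    rw [Fin.val_last, ← Nat.sub_add_cancel hk.le, iterate_add_apply, (hK.iterate _).eq]

theorem rel_iff_of_ancestorCode_eq {R : V → V → Prop} {S : W → W → Prop} {p : V → V}
    {q : W → W} {K : ℕ} (hK : ∀ x, IsFixedPt p (p^[K] x)) {φ : V → W} (hφ : Semiconj φ p q)
    (hcode : ∀ x, ancestorCode S q K (φ x) = ancestorCode R p K x) {x y : V}
    (hxy : (∃ k, p^[k] y = x) ∨ ∃ k, p^[k] x = y) : R x y ↔ S (φ x) (φ y) := by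
  rcases hxy with hk | hk
  · obtain ⟨k, rfl⟩ := exists_fin_iterate_eq (hK y) hk
    have := congrArg Prod.fst (congrFun (hcode y) k)
    simp only [ancestorCode] at this
    rw [← (hφ.iterate_right k).eq y] at this
    exact Iff.of_eq this.symm
  · obtain ⟨k, rfl⟩ := exists_fin_iterate_eq (hK x) hk
    have := congrArg Prod.snd (congrFun (hcode x) k)
    simp only [ancestorCode] at this
    rw [← (hφ.iterate_right k).eq x] at this
    exact Iff.of_eq this.symm

theorem Function.Semiconj.exists_iterate_eq_iff {p : V → V} {q : W → W} {φ : V → W}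
    (hφ : Semiconj φ p q) (hinj : Injective φ) {x y : V} :
    (∃ k, q^[k] (φ y) = φ x) ↔ ∃ k, p^[k] y = x := by
  simp only [← (hφ.iterate_right _).eq, hinj.eq_iff]

end InducedEmbedding

theorem exists_lt_induced_embedding {L : Type} [Finite L] (K : ℕ) (V : ℕ → Type)
    [∀ n, Finite (V n)] (R : ∀ n, V n → V n → Prop) (lab : ∀ n, V n → L)
    (hpath : ∀ n (l : List (V n)), l.IsChain (fun x y => R n x y ∨ R n y x) → l.Nodup →
      l.length ≤ K + 1) :
    ∃ i j, i < j ∧ ∃ φ : V i → V j, Injective φ ∧ (∀ x, lab j (φ x) = lab i x) ∧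
      ∀ x y, R i x y ↔ R j (φ x) (φ y) := by
  choose p h hF hnormal using fun n =>
    exists_isSpanningForest_normal (A := fun x y : V n => R n x y ∨ R n y x) fun _ _ => Or.symm
  have hK n x : IsFixedPt (p n) ((p n)^[K] x) :=
    (hF n).isFixedPt_iterate_of_height_le ((hF n).height_le_of_paths (hpath n) x)
  let F n : LabeledForest (L × (Fin (K + 1) → Prop × Prop)) :=
    ⟨V n, p n, fun x => (lab n x, ancestorCode (R n) (p n) K x)⟩
  obtain ⟨i, j, hij, φ, hφ, hφp, hφl⟩ :=
    (LabeledForest.partiallyWellOrderedOn_heightLE K).exists_lt (f := F) fun n => hK n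
  replace hφp : Semiconj φ (p i) (p j) := hφp
  have hR x y := rel_iff_of_ancestorCode_eq (hK i) hφp (fun x => congrArg Prod.snd (hφl x))
    (x := x) (y := y)
  refine ⟨i, j, hij, φ, hφ, fun x => congrArg Prod.fst (hφl x), fun x y =>
    ⟨fun hxy => (hR x y (hnormal i x y (Or.inl hxy))).1 hxy, fun hxy => (hR x y ?_).2 hxy⟩⟩
  simpa only [hφp.exists_iterate_eq_iff hφ] using hnormal j (φ x) (φ y) (Or.inl hxy)

namespace DataTree

variable {σ D : Type}

instance (T : DataTree σ D) : Finite T.GVert := by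
  have := T.fin
  have : Finite {d : D // ∃ v, T.label v = Sum.inr d} :=
    ((Set.finite_range T.label).preimage Sum.inr_injective.injOn).to_subtype
  exact inferInstanceAs (Finite (T.V ⊕ _))

def gLabel (T : DataTree σ D) : T.GVert → Option ((σ ⊕ Unit) × Prop)
  | .inl v => some (Sum.map id (fun _ => ()) (T.label v), v = T.root)
  | .inr _ => none

theorem pre_of_induced_embedding {T₁ T₂ : DataTree σ D} (φ : T₁.GVert → T₂.GVert)
    (hφ : Injective φ) (hlab : ∀ x, T₂.gLabel (φ x) = T₁.gLabel x)
    (hadj : ∀ x y, T₁.GAdjBase x y ↔ T₂.GAdjBase (φ x) (φ y)) : T₁.Pre T₂ := by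
  have htree v : ∃ w, φ (.inl v) = .inl w := by
    cases hv : φ (.inl v) with
    | inl w => exact ⟨w, rfl⟩
    | inr _ => simpa [hv, gLabel] using hlab (.inl v)
  have hval d : ∃ e, φ (.inr d) = .inr e := by
    cases hd : φ (.inr d) with
    | inl _ => simpa [hd, gLabel] using hlab (.inr d)
    | inr e => exact ⟨e, rfl⟩
  choose ψ hψ using htree
  choose ξ hξ using hval
  have hψlab v : Sum.map id (fun _ => ()) (T₂.label (ψ v)) = Sum.map id (fun _ => ()) (T₁.label v)
      ∧ (ψ v = T₂.root) = (v = T₁.root) := by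
    simpa [hψ, gLabel] using hlab (.inl v)
  have hdata v d (hv : T₁.label v = Sum.inr d) :
      T₂.label (ψ v) = Sum.inr (ξ ⟨d, v, hv⟩).1 := by
    simpa [hψ, hξ, GAdjBase] using (hadj (.inl v) (.inr ⟨d, v, hv⟩)).1 hv
  refine ⟨ψ, fun v w h => ?_, ?_, fun v w => ?_, fun v a hv => ?_, fun v w d d' hv hw => ?_⟩
  · exact Sum.inl_injective (hφ (by rw [hψ, hψ, h]))
  · exact (Iff.of_eq (hψlab T₁.root).2).2 rfl
  · have := hadj (.inl v) (.inl w)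
    rwa [hψ, hψ] at this
  · have := (hψlab v).1
    rw [hv] at this
    cases h : T₂.label (ψ v) <;> simp_all
  · refine ⟨_, _, hdata v d hv, hdata w d' hw, ?_⟩
    refine ⟨by rintro rfl; rfl, fun h => ?_⟩
    have := hφ (by rw [hξ, hξ, Subtype.ext h] : φ (.inr ⟨d, v, hv⟩) = φ (.inr ⟨d', w, hw⟩))
    exact congrArg Subtype.val (Sum.inr_injective this)

end DataTree

theorem stmt8_general {σ D : Type} [Finite σ] (K : ℕ) (f : ℕ → DataTree σ D)
    (hp : ∀ n, ∀ l : List (f n).GVert,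
      l.Chain' ((f n).GAdj) → l.Nodup → l.length ≤ K + 1) :
    ∃ i j, i < j ∧ (f i).Pre (f j) := by
  obtain ⟨i, j, hij, φ, hφ, hlab, hadj⟩ :=
    exists_lt_induced_embedding K (fun n => (f n).GVert) (fun n => (f n).GAdjBase)
      (fun n => (f n).gLabel) hp
  exact ⟨i, j, hij, DataTree.pre_of_induced_embedding φ hφ hlab hadj⟩

/-- The relation `⪯` is a well-quasi-order on data trees of depth at most `B` whose associated
graphs have all simple paths of length at most `K` (a simple path being a duplicate-free
list of successively adjacent vertices, its length the number of edges). -/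
theorem stmt8 {σ D : Type} [Finite σ] (B K : ℕ) (f : ℕ → DataTree σ D)
    (hd : ∀ n, ∀ v, (f n).depth v ≤ B)
    (hp : ∀ n, ∀ l : List (f n).GVert,
      l.Chain' ((f n).GAdj) → l.Nodup → l.length ≤ K + 1) :
    ∃ i j, i < j ∧ (f i).Pre (f j) :=
  stmt8_general K f hp
end

section
/- Let ⪯ be a well-quasi-order on S, and let → be compatible with ⪯. Then for any ⪯-upward-closed set I ⊆ S, the set Pred(I) = {s : ∃ t ∈ I, s → t} is ⪯-upward-closed. Moreover, the increasing sequence I_0 ⊆ I_1 ⊆ ... of upward-closed sets defined by I_0 = I and I_{n+1} = I_n ∪ Pred(I_n) stabilizes after finitely many steps, i.e., there exists n with I_{n+1} = I_n. -/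
def UpClosed {S : Type} (r : S → S → Prop) (I : Set S) : Prop :=
  ∀ s s', s ∈ I → r s s' → s' ∈ I

def PredSet {S : Type} (step : S → S → Prop) (I : Set S) : Set S :=
  {s | ∃ t ∈ I, step s t}

lemma predUp {S : Type} (r step : S → S → Prop)
    (hcompat : ∀ s t s', step s t → r s s' → ∃ t', step s' t' ∧ r t t')
    (I : Set S) (hI : UpClosed r I) : UpClosed r (PredSet step I) := by
  rintro s s' ⟨t, ht, hst⟩ hss'
  obtain ⟨t', hst', htt'⟩ := hcompat s t s' hst hss'
  exact ⟨t', hI t t' ht htt', hst'⟩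

/-- For a wqo `⪯` and a compatible transition relation `→`: `Pred` of an upward-closed set is
upward-closed, and the increasing sequence `I₀ = I`, `I_{n+1} = I_n ∪ Pred(I_n)` of
upward-closed sets stabilizes after finitely many steps. -/
theorem stmt10 {S : Type} (r : S → S → Prop) (step : S → S → Prop)
    (hrefl : Reflexive r) (htrans : Transitive r)
    (hwqo : ∀ f : ℕ → S, ∃ i j, i < j ∧ r (f i) (f j))
    (hcompat : ∀ s t s', step s t → r s s' → ∃ t', step s' t' ∧ r t t')
    (I : Set S) (hI : UpClosed r I) :
    UpClosed r (PredSet step I) ∧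
    ∃ n, (fun m => Nat.rec I (fun _ J => J ∪ PredSet step J) m : ℕ → Set S) (n + 1) =
      (fun m => Nat.rec I (fun _ J => J ∪ PredSet step J) m : ℕ → Set S) n := by
  set F : ℕ → Set S := (fun m => Nat.rec I (fun _ J => J ∪ PredSet step J) m) with hF
  have hFsucc : ∀ n, F (n + 1) = F n ∪ PredSet step (F n) := fun n => rfl
  refine ⟨predUp r step hcompat I hI, ?_⟩
  have hUp : ∀ n, UpClosed r (F n) := by
    intro n
    induction n with
    | zero => exact hI
    | succ n ih =>
      rintro s s' (hs | hs) hss'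
      · exact Or.inl (ih s s' hs hss')
      · exact Or.inr (predUp r step hcompat (F n) ih s s' hs hss')
  have hMono : ∀ m n, m ≤ n → F m ⊆ F n := by
    intro m n h
    induction n with
    | zero => simp_all
    | succ n ih =>
      rcases Nat.le_succ_iff.mp h with h' | h'
      · exact (ih h').trans (Set.subset_union_left)
      · exact h' ▸ subset_rfl
  by_contra hcon
  push_neg at hcon
  have hprop : ∀ n, ∃ s, s ∈ F (n + 1) ∧ s ∉ F n := by
    intro n
    by_contra h
    push_neg at h
    exact hcon n (Set.Subset.antisymm (fun s hs => h s hs)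
      (Set.subset_union_left))
  choose f hf1 hf2 using hprop
  obtain ⟨i, j, hij, hr⟩ := hwqo f
  exact hf2 j (hMono (i + 1) j hij (hUp (i + 1) (f i) (f j) (hf1 i) hr))
end

section
/- If (S, →, ⪯) is a well-structured transition system with ⪯ a decidable wqo, effective pred-basis, and decidable membership in the upward closures, then coverability is decidable: given s_0 ∈ S and a target upward-closed set I (given by a finite basis), one can decide whether some state of I is reachable from s_0, by computing the stabilizing sequence of finite bases of the sets I_n with I_0 = I, I_{n+1} = I_n ∪ Pred(I_n), and testing whether s_0 belongs to the final set. Formally (the mathematical core): s_0 can reach I in at most n steps iff s_0 ∈ I_n, and the sequence (I_n) of upward-closed sets stabilizes. -/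
/-- The upward closure of a set. -/
def UpCl {S : Type} (r : S → S → Prop) (I : Set S) : Set S :=
  {s' | ∃ s ∈ I, r s s'}

section Aux

variable {S : Type} (r step : S → S → Prop) (I : Set S)

def Iseq : ℕ → Set S :=
  fun m => Nat.rec (UpCl r I) (fun _ J => J ∪ UpCl r (PredSet step J)) m

variable {r step I}

lemma Iseq_succ (n : ℕ) :
    Iseq r step I (n + 1) = Iseq r step I n ∪ UpCl r (PredSet step (Iseq r step I n)) := rfl

lemma upcl_upclosed (htrans : Transitive r) (J : Set S) : UpClosed r (UpCl r J) := by
  rintro s s' ⟨t, ht, hts⟩ hss'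
  exact ⟨t, ht, htrans hts hss'⟩

lemma Iseq_upclosed (htrans : Transitive r) (n : ℕ) : UpClosed r (Iseq r step I n) := by
  induction n with
  | zero => exact upcl_upclosed htrans I
  | succ n ih =>
    rintro s s' (hs | hs) hss'
    · exact Or.inl (ih s s' hs hss')
    · exact Or.inr (upcl_upclosed htrans _ s s' hs hss')

lemma Iseq_mono (h : n ≤ m) : Iseq r step I n ⊆ Iseq r step I m := by
  induction h with
  | refl => exact subset_rfl
  | step _ ih => exact ih.trans Set.subset_union_left

lemma Iseq_of_run (hrefl : Reflexive r) (m : ℕ) (f : ℕ → S)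
    (hstep : ∀ k < m, step (f k) (f (k + 1))) (hend : f m ∈ I) :
    f 0 ∈ Iseq r step I m := by
  induction m generalizing f with
  | zero => exact ⟨f 0, hend, hrefl _⟩
  | succ m ih =>
    have h1 : f 1 ∈ Iseq r step I m :=
      ih (fun k => f (k + 1)) (fun k hk => hstep (k + 1) (by omega)) hend
    exact Or.inr ⟨f 0, ⟨f 1, h1, hstep 0 (by omega)⟩, hrefl _⟩

lemma run_of_Iseq (hrefl : Reflexive r) (htrans : Transitive r)
    (hcompat : ∀ s t s', step s t → r s s' → ∃ t', step s' t' ∧ r t t')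
    (hI : UpClosed r I) (n : ℕ) (s₀ : S) (hs : s₀ ∈ Iseq r step I n) :
    ∃ m ≤ n, ∃ f : ℕ → S, f 0 = s₀ ∧ (∀ k < m, step (f k) (f (k + 1))) ∧ f m ∈ I := by
  induction n generalizing s₀ with
  | zero =>
    obtain ⟨s, hsI, hss⟩ := hs
    exact ⟨0, le_rfl, fun _ => s₀, rfl, fun k hk => absurd hk (by omega), hI s s₀ hsI hss⟩
  | succ n ih =>
    rcases hs with hs | hs
    · obtain ⟨m, hm, hf⟩ := ih s₀ hs
      exact ⟨m, hm.trans (by omega), hf⟩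
    · obtain ⟨s, ⟨t, htI, hst⟩, hss⟩ := hs
      obtain ⟨t', hstep', htt'⟩ := hcompat s t s₀ hst hss
      have ht' : t' ∈ Iseq r step I n := Iseq_upclosed htrans n t t' htI htt'
      obtain ⟨m, hm, f, hf0, hfs, hfm⟩ := ih t' ht'
      refine ⟨m + 1, by omega, fun k => Nat.rec s₀ (fun k _ => f k) k, rfl, ?_, hfm⟩
      intro k hk
      cases k with
      | zero => simpa [hf0] using hstep'
      | succ k => exact hfs k (by omega)

lemma Iseq_stab (hrefl : Reflexive r) (htrans : Transitive r)
    (hwqo : ∀ f : ℕ → S, ∃ i j, i < j ∧ r (f i) (f j)) :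
    ∃ n : ℕ, ∀ m, n ≤ m → Iseq r step I m = Iseq r step I n := by
  have key : ∃ n : ℕ, Iseq r step I (n + 1) = Iseq r step I n := by
    by_contra h
    push_neg at h
    have hx : ∀ n, ∃ x, x ∈ Iseq r step I (n + 1) ∧ x ∉ Iseq r step I n := by
      intro n
      have hne := h n
      have hsub : Iseq r step I n ⊆ Iseq r step I (n + 1) := Iseq_mono (by omega)
      rcases Set.exists_of_ssubset (ssubset_of_subset_of_ne hsub (Ne.symm hne)) with ⟨x, hx1, hx2⟩
      exact ⟨x, hx1, hx2⟩
    choose x hx1 hx2 using hx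
    obtain ⟨i, j, hij, hr⟩ := hwqo x
    have hxi : x i ∈ Iseq r step I j := Iseq_mono (by omega) (hx1 i)
    exact hx2 j (Iseq_upclosed htrans j _ _ hxi hr)
  obtain ⟨n, hn⟩ := key
  refine ⟨n, fun m hm => ?_⟩
  induction hm with
  | refl => rfl
  | step h ih => rw [Iseq_succ, ih, ← Iseq_succ, hn]

end Aux

/-- Mathematical core of the decidability of coverability for WSTS: with
`I₀ = ↑I` and `I_{n+1} = I_n ∪ ↑Pred(I_n)`, the state `s₀` can reach the upward-closed set
`I` in at most `n` steps iff `s₀ ∈ I_n`, and the chain `(I_n)` is eventually constant. -/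
theorem stmt14 {S : Type} (r : S → S → Prop) (step : S → S → Prop)
    (hrefl : Reflexive r) (htrans : Transitive r)
    (hwqo : ∀ f : ℕ → S, ∃ i j, i < j ∧ r (f i) (f j))
    (hcompat : ∀ s t s', step s t → r s s' → ∃ t', step s' t' ∧ r t t')
    (I : Set S) (hI : UpClosed r I) (s₀ : S) :
    (∀ n : ℕ,
      ((∃ m ≤ n, ∃ f : ℕ → S, f 0 = s₀ ∧ (∀ k < m, step (f k) (f (k + 1))) ∧ f m ∈ I) ↔
        s₀ ∈ (fun m => Nat.rec (UpCl r I) (fun _ J => J ∪ UpCl r (PredSet step J)) m :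
          ℕ → Set S) n)) ∧
    ∃ n : ℕ, ∀ m, n ≤ m →
      (fun m' => Nat.rec (UpCl r I) (fun _ J => J ∪ UpCl r (PredSet step J)) m' :
        ℕ → Set S) m =
      (fun m' => Nat.rec (UpCl r I) (fun _ J => J ∪ UpCl r (PredSet step J)) m' :
        ℕ → Set S) n := by
  constructor
  · intro n
    constructor
    · rintro ⟨m, hm, f, hf0, hfs, hfm⟩
      have : f 0 ∈ Iseq r step I m := Iseq_of_run hrefl m f hfs hfm
      exact Iseq_mono hm (hf0 ▸ this)
    · intro hs
      exact run_of_Iseq hrefl htrans hcompat hI n s₀ hs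
  · exact Iseq_stab hrefl htrans hwqo
end
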